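/- arXiv:1310.8441 — 6 statements merged into one kernel-verified Lean document; each statement's English description precedes it below -/
import Mathlib

section
/- Let t ≥ 1 be an integer. A (2t+1)-regular finite multigraph G has a nowhere-zero (2 + 2/(2t−1))-flow if and only if G has a 1-factor F such that G − F is bipartite. -/
structure Multigraph where
  V : Type
  E : Type
  [finV : Finite V]
  [finE : Finite E]
  fst : E → V
  snd : E → V

attribute [instance] Multigraph.finV Multigraph.finE

namespace Multigraph

/-- The degree of a vertex (loops count twice). -/
noncomputable def degree (G : Multigraph) (v : G.V) : ℕ :=
  Nat.card {e : G.E // G.fst e = v} + Nat.card {e : G.E // G.snd e = v}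

def IsRegular (G : Multigraph) (k : ℕ) : Prop := ∀ v, G.degree v = k

/-- `φ` is a nowhere-zero `r`-flow: values have absolute value in `[1, r-1]`
(the sign of `φ e` encodes the chosen orientation of `e`), and flow is conserved
at every vertex. -/
def IsNowhereZeroFlow (G : Multigraph) (r : ℝ) (φ : G.E → ℝ) : Prop :=
  (∀ e, 1 ≤ |φ e| ∧ |φ e| ≤ r - 1) ∧
  ∀ v : G.V, (∑ᶠ e ∈ {e : G.E | G.fst e = v}, φ e) = ∑ᶠ e ∈ {e : G.E | G.snd e = v}, φ e

def HasNowhereZeroFlow (G : Multigraph) (r : ℝ) : Prop := ∃ φ, G.IsNowhereZeroFlow r φ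

/-- The circular flow number, `⊤` if `G` has no nowhere-zero flow. -/
noncomputable def flowNumber (G : Multigraph) : EReal :=
  sInf {x : EReal | ∃ r : ℝ, x = (r : EReal) ∧ G.HasNowhereZeroFlow r}

def Bipartite (G : Multigraph) : Prop :=
  ∃ c : G.V → Bool, ∀ e, c (G.fst e) ≠ c (G.snd e)

def IsOneFactor (G : Multigraph) (F : Set G.E) : Prop :=
  (∀ e ∈ F, G.fst e ≠ G.snd e) ∧
  ∀ v : G.V, ∃! e : G.E, e ∈ F ∧ (G.fst e = v ∨ G.snd e = v)

/-- `G - F` is bipartite. -/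
def BipartiteWithout (G : Multigraph) (F : Set G.E) : Prop :=
  ∃ c : G.V → Bool, ∀ e ∉ F, c (G.fst e) ≠ c (G.snd e)

def IsProperEdgeColoring (G : Multigraph) {n : ℕ} (c : G.E → Fin n) : Prop :=
  ∀ e₁ e₂ : G.E, e₁ ≠ e₂ →
    (G.fst e₁ = G.fst e₂ ∨ G.fst e₁ = G.snd e₂ ∨ G.snd e₁ = G.fst e₂ ∨ G.snd e₁ = G.snd e₂) →
    c e₁ ≠ c e₂

noncomputable def edgeChromaticNumber (G : Multigraph) : ℕ :=
  sInf {n : ℕ | ∃ c : G.E → Fin n, G.IsProperEdgeColoring c}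

def edgeBoundary (G : Multigraph) (X : Set G.V) : Set G.E :=
  {e | (G.fst e ∈ X) ≠ (G.snd e ∈ X)}

def IsBalancedValuation (G : Multigraph) (w : G.V → ℝ) : Prop :=
  ∀ X : Set G.V, |∑ᶠ v ∈ X, w v| ≤ (G.edgeBoundary X).ncard

end Multigraph

/-!
Flows are vectors in the kernel of the oriented incidence matrix. After scaling by `2t - 1`, a
nowhere-zero `(2 + 2/(2t-1))`-flow is a real circulation with `2t - 1 ≤ |ψ| ≤ 2t + 1`. These bounds
are integers, and a real flow whose net out-flows are integers can be rounded edgewise to an integer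
flow with the same net out-flows: an extreme point of the polytope of such roundings is integral,
because at a fractional one no vertex meets exactly one fractional edge, and then the fractional
columns of the incidence matrix are linearly dependent.

For an integer circulation `ζ` with `2t - 1 ≤ |ζ| ≤ 2t + 1`, counting at a vertex of degree `2t + 1`
shows that there are no loops, that out- and in-degree differ by one, and that exactly one edge at
each vertex has `|ζ| = 2t`; the other edges carry `2t ∓ 1` according to the sign `s v` of that
difference. The edges with `|ζ| = 2t` form `F`, and `s` properly 2-colours `G - F`.

Conversely, given `F` and a 2-colouring of `G - F`, the fractional orientation `τ` sending `1/2t`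
along every edge of `G - F` from one colour class to the other has net out-flow `±1` everywhere.
Rounding `τ` gives an orientation `σ` with the same net out-flows, and `2t/(2t-1) • (σ - τ)` is the
required flow.
-/

open Finset Matrix Filter Topology

theorem Finset.exists_eq_one_of_sum_eq_one {ι : Type*} {S : Finset ι} {f : ι → ℤ}
    (hf : ∀ i ∈ S, 0 ≤ f i) (h : ∑ i ∈ S, f i = 1) :
    ∃ i ∈ S, f i = 1 ∧ ∀ j ∈ S, j ≠ i → f j = 0 := by
  classical
  obtain ⟨i, hi, hpos⟩ : ∃ i ∈ S, 0 < f i := by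
    by_contra! h0
    rw [sum_eq_zero fun i hi => le_antisymm (h0 i hi) (hf i hi)] at h
    exact zero_ne_one h
  have hpair (j : ι) (hj : j ∈ S) (hji : j ≠ i) : f i + f j ≤ 1 := by
    rw [← h, ← sum_pair hji.symm]
    exact sum_le_sum_of_subset_of_nonneg (by simp [insert_subset_iff, hi, hj]) fun k hk _ => hf k hk
  have hi1 : f i ≤ 1 := h ▸ single_le_sum hf hi
  refine ⟨i, hi, by omega, fun j hj hji => ?_⟩
  have := hpair j hj hji
  have := hf j hj
  omega

theorem Finset.odd_sum_sign {ι : Type*} {S : Finset ι} {y : ι → ℤ} (hy : ∀ i ∈ S, y i ≠ 0)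
    (hodd : Odd #S) : Odd (∑ i ∈ S, (y i).sign) := by
  have heven : Even (∑ i ∈ S, (1 - (y i).sign)) := even_sum _ fun i hi => by
    rcases (hy i hi).lt_or_gt with h | h
    · simp [Int.sign_eq_neg_one_of_neg h]
    · simp [Int.sign_eq_one_of_pos h]
  rw [sum_sub_distrib, sum_const, nsmul_one] at heven
  simpa using (hodd.natCast (R := ℤ)).sub_even heven

theorem card_eq_and_exists_of_sum_eq_zero_of_sum_sign_pos {ι : Type*} {S : Finset ι} {y : ι → ℤ}
    {t : ℕ} (ht : 1 ≤ t) (hy : ∀ i ∈ S, 2 * t - 1 ≤ |y i| ∧ |y i| ≤ 2 * t + 1) (hodd : Odd #S)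
    (hcard : #S ≤ 2 * t + 1) (hsum : ∑ i ∈ S, y i = 0) (hD : 0 < ∑ i ∈ S, (y i).sign) :
    #S = 2 * t + 1 ∧ ∃ i ∈ S, |y i| = 2 * t ∧ ∀ j ∈ S, j ≠ i → |y j + 1| = 2 * t := by
  have hy0 (i : ι) (hi : i ∈ S) : y i ≠ 0 := fun h => by
    have := (hy i hi).1
    simp [h] at this
    omega
  set D := ∑ i ∈ S, (y i).sign
  -- `slack i ∈ {0, 1, 2}` and `∑ slack = #S - 2tD ≥ 0` force `D = 1`, `#S = 2t + 1`, `∑ slack = 1`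
  set slack : ι → ℤ := fun i => y i + 1 - 2 * t * (y i).sign
  have hslack (i : ι) (hi : i ∈ S) : 0 ≤ slack i ∧ (slack i = 1 → |y i| = 2 * t) ∧
      (slack i = 0 → |y i + 1| = 2 * t) := by
    have := hy i hi
    simp only [slack, abs_eq (by positivity : (0 : ℤ) ≤ 2 * t)]
    rcases (hy0 i hi).lt_or_gt with h | h
    · rw [abs_of_neg h] at this
      simp only [Int.sign_eq_neg_one_of_neg h]
      omega
    · rw [abs_of_pos h] at this
      simp only [Int.sign_eq_one_of_pos h]
      omega
  have hsum_slack : ∑ i ∈ S, slack i = #S - 2 * t * D := by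
    simp only [slack, sum_sub_distrib, sum_add_distrib, hsum, ← mul_sum, sum_const, nsmul_one, D]
    ring
  have hDS : 2 * t * D ≤ #S := by
    linarith [sum_nonneg fun i hi => (hslack i hi).1]
  have hD1 : D = 1 := by
    obtain ⟨k, hk⟩ := odd_sum_sign hy0 hodd
    have : (1 : ℤ) ≤ t := by exact_mod_cast ht
    nlinarith
  have hS : #S = 2 * t + 1 := by
    rw [hD1, mul_one] at hDS
    obtain ⟨m, hm⟩ := hodd
    omega
  obtain ⟨i, hi, hi1, hj0⟩ := exists_eq_one_of_sum_eq_one (fun i hi => (hslack i hi).1)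
    (by rw [hsum_slack, hD1, hS]; push_cast; ring)
  exact ⟨hS, i, hi, (hslack i hi).2.1 hi1, fun j hj hji => (hslack j hj).2.2 (hj0 j hj hji)⟩

theorem card_eq_and_exists_sign_of_sum_eq_zero {ι : Type*} {S : Finset ι} {y : ι → ℤ} {t : ℕ}
    (ht : 1 ≤ t) (hy : ∀ i ∈ S, 2 * t - 1 ≤ |y i| ∧ |y i| ≤ 2 * t + 1) (hodd : Odd #S)
    (hcard : #S ≤ 2 * t + 1) (hsum : ∑ i ∈ S, y i = 0) :
    #S = 2 * t + 1 ∧ ∃ s : ℤ, (s = 1 ∨ s = -1) ∧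
      ∃ i ∈ S, |y i| = 2 * t ∧ ∀ j ∈ S, j ≠ i → |y j + s| = 2 * t := by
  have hy0 (i : ι) (hi : i ∈ S) : y i ≠ 0 := fun h => by
    have := (hy i hi).1
    simp [h] at this
    omega
  have hD : ∑ i ∈ S, (y i).sign ≠ 0 := fun h => by simpa [h] using odd_sum_sign hy0 hodd
  rcases hD.lt_or_gt with hD | hD
  · obtain ⟨hS, i, hi, hyi, hj⟩ := card_eq_and_exists_of_sum_eq_zero_of_sum_sign_pos (y := (-y ·))
      ht (by simpa using hy) hodd hcard (by simp [hsum]) (by simpa using hD)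
    refine ⟨hS, -1, Or.inr rfl, i, hi, by simpa using hyi, fun j hj' hji => ?_⟩
    rw [← abs_neg, neg_add, neg_neg]
    exact hj j hj' hji
  · obtain ⟨hS, i, hi, hyi, hj⟩ :=
      card_eq_and_exists_of_sum_eq_zero_of_sum_sign_pos ht hy hodd hcard hsum hD
    exact ⟨hS, 1, Or.inl rfl, i, hi, hyi, hj⟩

theorem abs_mem_Icc_of_mem_Icc_floor_ceil {x : ℝ} {a b z : ℤ} (ha : 0 < a)
    (hx : |x| ∈ Set.Icc (a : ℝ) b) (hz : z ∈ Set.Icc ⌊x⌋ ⌈x⌉) : |z| ∈ Set.Icc a b := by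
  obtain ⟨hxa, hxb⟩ := hx
  obtain ⟨hz1, hz2⟩ := hz
  rcases le_or_gt 0 x with h | h
  · rw [abs_of_nonneg h] at hxa hxb
    have h1 : a ≤ ⌊x⌋ := Int.le_floor.2 hxa
    have h2 : ⌈x⌉ ≤ b := Int.ceil_le.2 hxb
    rw [abs_of_pos (by omega)]
    exact ⟨by omega, by omega⟩
  · rw [abs_of_neg h] at hxa hxb
    have h1 : -b ≤ ⌊x⌋ := Int.le_floor.2 (by push_cast; linarith)
    have h2 : ⌈x⌉ ≤ -a := Int.ceil_le.2 (by push_cast; linarith)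
    rw [abs_of_neg (by omega)]
    exact ⟨by omega, by omega⟩

theorem abs_two_mul_mul_sub_mem_Icc {t σ κ : ℝ} (ht : 0 ≤ t) (hσ : σ = 1 ∨ σ = -1)
    (hκ : κ = 0 ∨ κ = 1 ∨ κ = -1) : |2 * t * σ - κ| ∈ Set.Icc (2 * t - 1) (2 * t + 1) := by
  rw [Set.mem_Icc, le_abs, abs_le]
  rcases hσ with rfl | rfl <;> rcases hκ with rfl | rfl | rfl <;>
    refine ⟨?_, ?_, ?_⟩ <;> first | (left; linarith) | (right; linarith) | linarith

theorem eventually_add_mul_mem_Icc {x c : ℝ} {a b : ℤ} (hx : x ∈ Set.Icc (a : ℝ) b)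
    (hc : c = 0 ∨ x ∉ (⊥ : Subring ℝ)) : ∀ᶠ ε in 𝓝 (0 : ℝ), x + ε * c ∈ Set.Icc (a : ℝ) b := by
  rcases hc with rfl | hx'
  · exact Eventually.of_forall fun _ => by simpa using hx
  have hIoo : x ∈ Set.Ioo (a : ℝ) b :=
    ⟨hx.1.lt_of_ne fun h => hx' (h ▸ intCast_mem _ _),
      hx.2.lt_of_ne fun h => hx' (h ▸ intCast_mem _ _)⟩
  have hlim : Tendsto (fun ε : ℝ => x + ε * c) (𝓝 0) (𝓝 x) := by
    simpa using ((tendsto_id (x := 𝓝 (0 : ℝ))).mul_const c).const_add x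
  exact (hlim.eventually (Ioo_mem_nhds hIoo.1 hIoo.2)).mono fun _ h => Set.Ioo_subset_Icc_self h

namespace Multigraph

variable (G : Multigraph) [DecidableEq G.V]

/-- The oriented incidence matrix; unlike `SimpleGraph.incMatrix` it is signed. -/
def incMatrix (R : Type*) [Ring R] : Matrix G.V G.E R :=
  of fun v e => (if G.fst e = v then 1 else 0) - (if G.snd e = v then 1 else 0)

variable {G} {R : Type*} [Ring R] {t : ℕ}

theorem incMatrix_apply (v : G.V) (e : G.E) :
    G.incMatrix R v e = (if G.fst e = v then 1 else 0) - (if G.snd e = v then 1 else 0) :=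
  rfl

theorem incMatrix_fst {e : G.E} (he : G.fst e ≠ G.snd e) : G.incMatrix R (G.fst e) e = 1 := by
  simp [incMatrix_apply, Ne.symm he]

theorem incMatrix_snd {e : G.E} (he : G.fst e ≠ G.snd e) : G.incMatrix R (G.snd e) e = -1 := by
  simp [incMatrix_apply, he]

theorem incMatrix_ne_zero_iff [Nontrivial R] {v : G.V} {e : G.E} :
    G.incMatrix R v e ≠ 0 ↔ (G.fst e = v ∨ G.snd e = v) ∧ G.fst e ≠ G.snd e := by
  by_cases h1 : G.fst e = v <;> by_cases h2 : G.snd e = v <;> simp [incMatrix_apply, h1, h2]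
  all_goals grind

theorem incMatrix_mul_self [Nontrivial R] {v : G.V} {e : G.E}
    (h : G.incMatrix R v e ≠ 0) : G.incMatrix R v e * G.incMatrix R v e = 1 := by
  obtain ⟨hv, hloop⟩ := incMatrix_ne_zero_iff.1 h
  rcases hv with rfl | rfl
  · simp [incMatrix_fst hloop]
  · simp [incMatrix_snd hloop]

theorem abs_incMatrix_of_ne_zero {v : G.V} {e : G.E} (h : G.incMatrix ℤ v e ≠ 0) :
    |G.incMatrix ℤ v e| = 1 := by
  obtain ⟨hv | hv, hloop⟩ := incMatrix_ne_zero_iff.1 h <;> subst hv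
  · simp [incMatrix_fst hloop]
  · simp [incMatrix_snd hloop]

theorem incMatrix_mem_bot (v : G.V) (e : G.E) :
    G.incMatrix R v e ∈ (⊥ : Subring R) := by
  rw [incMatrix_apply]
  split_ifs <;> simp [one_mem, zero_mem]

theorem card_filter_nonempty_incMatrix_ne_zero_le [Fintype G.V] {K : Type*} [Field K]
    [DecidableEq K] (N : Finset G.E) (hdeg : ∀ v, #{e ∈ N | G.incMatrix K v e ≠ 0} ≠ 1) :
    #{v | ({e ∈ N | G.incMatrix K v e ≠ 0} : Finset G.E).Nonempty} ≤ #N := by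
  set W : Finset G.V := {v | ({e ∈ N | G.incMatrix K v e ≠ 0} : Finset G.E).Nonempty}
  have := @card_mul_le_card_mul _ _ (fun v e => G.incMatrix K v e ≠ 0) W N 2 2
    (fun _ _ => inferInstance) ?_ ?_
  · omega
  · intro v hv
    have h0 := card_ne_zero.2 (mem_filter.1 hv).2
    have := hdeg v
    simp only [bipartiteAbove]
    omega
  · intro e _
    refine (card_le_card fun v hv => ?_).trans (card_le_two (a := G.fst e) (b := G.snd e))
    simp only [bipartiteBelow, mem_filter, incMatrix_ne_zero_iff] at hv
    simp only [mem_insert, mem_singleton]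
    exact hv.2.1.imp Eq.symm Eq.symm

variable [Fintype G.E]

theorem incMatrix_mulVec_apply (f : G.E → R) (v : G.V) :
    (G.incMatrix R *ᵥ f) v = ∑ e with G.fst e = v, f e - ∑ e with G.snd e = v, f e := by
  simp [mulVec, dotProduct, incMatrix_apply, sub_mul, Finset.sum_sub_distrib, Finset.sum_filter]

theorem intCast_incMatrix_mulVec (ζ : G.E → ℤ) (v : G.V) :
    (((G.incMatrix ℤ *ᵥ ζ) v : ℤ) : R) = (G.incMatrix R *ᵥ fun e => (ζ e : R)) v := by
  simp [incMatrix_mulVec_apply]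

theorem degree_eq (v : G.V) : G.degree v = #{e | G.fst e = v} + #{e | G.snd e = v} := by
  simp only [degree, Nat.card_eq_fintype_card, Fintype.card_subtype]

theorem card_incMatrix_ne_zero_add_two_mul (v : G.V) :
    #{e | G.incMatrix ℤ v e ≠ 0} + 2 * #{e | G.fst e = v ∧ G.snd e = v} = G.degree v := by
  simp only [degree_eq, card_filter, mul_sum, ← sum_add_distrib]
  refine sum_congr rfl fun e _ => ?_
  by_cases h1 : G.fst e = v <;> by_cases h2 : G.snd e = v <;> simp [incMatrix_apply, h1, h2]

theorem isNowhereZeroFlow_iff {r : ℝ} {φ : G.E → ℝ} :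
    G.IsNowhereZeroFlow r φ ↔
      (∀ e, 1 ≤ |φ e| ∧ |φ e| ≤ r - 1) ∧ G.incMatrix ℝ *ᵥ φ = 0 := by
  have hset (p : G.E → Prop) [DecidablePred p] : {e | p e} = ↑(univ.filter p) := by ext; simp
  simp only [IsNowhereZeroFlow, funext_iff, incMatrix_mulVec_apply, Pi.zero_apply, sub_eq_zero,
    hset, finsum_mem_coe_finset]

theorem card_incident_eq_degree (hloop : ∀ e, G.fst e ≠ G.snd e) (v : G.V) :
    #{e | G.fst e = v ∨ G.snd e = v} = G.degree v := by
  have hnoloop : #{e | G.fst e = v ∧ G.snd e = v} = 0 :=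
    card_eq_zero.2 (filter_eq_empty_iff.2 fun e _ h => hloop e (h.1.trans h.2.symm))
  simp only [← card_incMatrix_ne_zero_add_two_mul, hnoloop, mul_zero, add_zero,
    incMatrix_ne_zero_iff, hloop, ne_eq, not_false_eq_true, and_true]

theorem card_incident_notMem_of_isOneFactor (hreg : G.IsRegular (2 * t + 1))
    (hloop : ∀ e, G.fst e ≠ G.snd e) {F : Set G.E} [DecidablePred (· ∈ F)] (hF : G.IsOneFactor F)
    (v : G.V) : #{e | (G.fst e = v ∨ G.snd e = v) ∧ e ∉ F} = 2 * t := by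
  obtain ⟨e₀, he₀, huniq⟩ := hF.2 v
  have h1 : #{e | (G.fst e = v ∨ G.snd e = v) ∧ e ∈ F} = 1 :=
    card_eq_one.2 ⟨e₀, eq_singleton_iff_unique_mem.2
      ⟨by simpa [and_comm] using he₀, fun e he => huniq e (by simpa [and_comm] using he)⟩⟩
  have h2 := card_filter_add_card_filter_not (s := {e | G.fst e = v ∨ G.snd e = v}) (p := (· ∈ F))
  rw [card_incident_eq_degree hloop, hreg v, filter_filter, filter_filter] at h2
  omega

theorem incMatrix_mulVec_crossing (hloop : ∀ e, G.fst e ≠ G.snd e) {F : Set G.E}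
    [DecidablePred (· ∈ F)] {c : G.V → Bool} (hc : ∀ e ∉ F, c (G.fst e) ≠ c (G.snd e)) (v : G.V) :
    (G.incMatrix ℝ *ᵥ fun e => if e ∈ F then 0 else if c (G.fst e) then 1 else -1) v =
      (if c v then 1 else -1) * #{e | (G.fst e = v ∨ G.snd e = v) ∧ e ∉ F} := by
  rw [mulVec, dotProduct, card_filter, Nat.cast_sum, mul_sum]
  refine sum_congr rfl fun e _ => ?_
  by_cases he : e ∈ F
  · simp [he]
  by_cases h1 : G.fst e = v
  · subst h1
    simp [he, incMatrix_fst (hloop e)]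
  by_cases h2 : G.snd e = v
  · subst h2
    have := hc e he
    cases hf : c (G.fst e) <;> cases hs : c (G.snd e) <;> simp_all [incMatrix_snd (hloop e)]
  · simp [incMatrix_apply, h1, h2]

theorem exists_sign_of_int_flow (ht : 1 ≤ t) (hreg : G.IsRegular (2 * t + 1)) (ζ : G.E → ℤ)
    (hζ : ∀ e, 2 * t - 1 ≤ |ζ e| ∧ |ζ e| ≤ 2 * t + 1) (hcons : G.incMatrix ℤ *ᵥ ζ = 0)
    (v : G.V) :
    #{e | G.incMatrix ℤ v e ≠ 0} = 2 * t + 1 ∧ ∃ s : ℤ, (s = 1 ∨ s = -1) ∧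
      ∃ i, G.incMatrix ℤ v i ≠ 0 ∧ |ζ i| = 2 * t ∧
        ∀ e, G.incMatrix ℤ v e ≠ 0 → e ≠ i → |G.incMatrix ℤ v e * ζ e + s| = 2 * t := by
  have hdeg := card_incMatrix_ne_zero_add_two_mul (G := G) v
  rw [hreg v] at hdeg
  have hsum : ∑ e with G.incMatrix ℤ v e ≠ 0, G.incMatrix ℤ v e * ζ e = 0 := by
    rw [sum_filter_of_ne fun e _ h => left_ne_zero_of_mul h]
    exact congrFun hcons v
  obtain ⟨hS, s, hs, i, hi, hyi, hj⟩ := card_eq_and_exists_sign_of_sum_eq_zero ht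
    (fun e he => by
      rw [abs_mul, abs_incMatrix_of_ne_zero (mem_filter.1 he).2, one_mul]
      exact hζ e)
    ⟨t - #{e | G.fst e = v ∧ G.snd e = v}, by omega⟩ (by omega) hsum
  simp only [mem_filter, mem_univ, true_and] at hi hj
  rw [abs_mul, abs_incMatrix_of_ne_zero hi, one_mul] at hyi
  exact ⟨hS, s, hs, i, hi, hyi, hj⟩

theorem fst_ne_snd_of_int_flow (ht : 1 ≤ t) (hreg : G.IsRegular (2 * t + 1)) (ζ : G.E → ℤ)
    (hζ : ∀ e, 2 * t - 1 ≤ |ζ e| ∧ |ζ e| ≤ 2 * t + 1) (hcons : G.incMatrix ℤ *ᵥ ζ = 0)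
    (e : G.E) : G.fst e ≠ G.snd e := by
  intro h
  have hdeg := card_incMatrix_ne_zero_add_two_mul (G := G) (G.fst e)
  rw [hreg, (exists_sign_of_int_flow ht hreg ζ hζ hcons _).1] at hdeg
  have : e ∈ ({e' | G.fst e' = G.fst e ∧ G.snd e' = G.fst e} : Finset G.E) := by simp [h]
  have := card_pos.2 ⟨e, this⟩
  omega

theorem exists_isOneFactor_of_int_flow (ht : 1 ≤ t) (hreg : G.IsRegular (2 * t + 1))
    (ζ : G.E → ℤ) (hζ : ∀ e, 2 * t - 1 ≤ |ζ e| ∧ |ζ e| ≤ 2 * t + 1)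
    (hcons : G.incMatrix ℤ *ᵥ ζ = 0) :
    ∃ F : Set G.E, G.IsOneFactor F ∧ G.BipartiteWithout F := by
  have hloop := fst_ne_snd_of_int_flow ht hreg ζ hζ hcons
  have hinc {v : G.V} {e : G.E} : G.incMatrix ℤ v e ≠ 0 ↔ G.fst e = v ∨ G.snd e = v := by
    rw [incMatrix_ne_zero_iff, and_iff_left (hloop e)]
  choose _ s hs i hi hyi hj using exists_sign_of_int_flow ht hreg ζ hζ hcons
  have hval {v : G.V} {e : G.E} (he : G.incMatrix ℤ v e ≠ 0) (hei : e ≠ i v) : |ζ e| ≠ 2 * t := by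
    have h := hj v e he hei
    rw [← one_mul |ζ e|, ← abs_incMatrix_of_ne_zero he, ← abs_mul]
    intro h'
    rw [abs_eq (by positivity)] at h h'
    rcases hs v with hsv | hsv <;> omega
  refine ⟨{e | |ζ e| = 2 * t}, ⟨fun e _ => hloop e, fun v => ⟨i v, ⟨hyi v, hinc.1 (hi v)⟩, ?_⟩⟩,
    fun v => s v = 1, fun e he => ?_⟩
  · rintro e ⟨he, hev⟩
    by_contra hei
    exact hval (hinc.2 hev) hei he
  · -- `e` carries `ζ e` out of `G.fst e` and into `G.snd e`; equal signs there force `ζ e = 0`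
    have hfst := hj (G.fst e) e (by rw [incMatrix_fst (hloop e)]; simp)
      fun h => he (h ▸ hyi (G.fst e))
    have hsnd := hj (G.snd e) e (by rw [incMatrix_snd (hloop e)]; simp)
      fun h => he (h ▸ hyi (G.snd e))
    rw [incMatrix_fst (hloop e), one_mul] at hfst
    rw [incMatrix_snd (hloop e), neg_one_mul] at hsnd
    rw [abs_eq (by positivity)] at hfst hsnd
    simp only [ne_eq, decide_eq_decide]
    rcases hs (G.fst e) with h1 | h1 <;> rcases hs (G.snd e) with h2 | h2 <;> simp [h1, h2] <;>
      omega

variable (G) in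
def flowRoundings (ψ : G.E → ℝ) : Set (G.E → ℝ) :=
  (Set.univ.pi fun e => Set.Icc (⌊ψ e⌋ : ℝ) ⌈ψ e⌉) ∩
    {x | G.incMatrix ℝ *ᵥ x = G.incMatrix ℝ *ᵥ ψ}

theorem isCompact_flowRoundings (ψ : G.E → ℝ) : IsCompact (G.flowRoundings ψ) :=
  (isCompact_univ_pi fun _ => isCompact_Icc).inter_right
    (isClosed_eq (by fun_prop) continuous_const)

theorem card_filter_incMatrix_ne_zero_ne_one_of_mem_bot {x : G.E → ℝ} {N : Finset G.E}
    (hN : ∀ e, e ∈ N ↔ x e ∉ (⊥ : Subring ℝ)) (v : G.V)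
    (hv : (G.incMatrix ℝ *ᵥ x) v ∈ (⊥ : Subring ℝ)) : #{e ∈ N | G.incMatrix ℝ v e ≠ 0} ≠ 1 := by
  classical
  intro h
  obtain ⟨e₀, he₀⟩ := card_eq_one.1 h
  obtain ⟨he₀N, he₀v⟩ := mem_filter.1 (he₀ ▸ mem_singleton_self e₀)
  have hrest : ∑ e ∈ univ.erase e₀, G.incMatrix ℝ v e * x e ∈ (⊥ : Subring ℝ) := by
    refine Subring.sum_mem _ fun e he => ?_
    by_cases hve : G.incMatrix ℝ v e = 0
    · simp [hve, zero_mem]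
    have : e ∉ N := fun heN => ne_of_mem_erase he <| mem_singleton.1 <|
      he₀ ▸ mem_filter.2 ⟨heN, hve⟩
    exact mul_mem (incMatrix_mem_bot v e) (not_not.1 (mt (hN e).2 this))
  have hmul : G.incMatrix ℝ v e₀ * x e₀ ∈ (⊥ : Subring ℝ) := by
    rw [← add_sub_cancel_right (G.incMatrix ℝ v e₀ * x e₀)
      (∑ e ∈ univ.erase e₀, G.incMatrix ℝ v e * x e),
      add_sum_erase univ (fun e => G.incMatrix ℝ v e * x e) (mem_univ e₀)]
    exact sub_mem hv hrest
  refine (hN e₀).1 he₀N ?_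
  rw [← one_mul (x e₀), ← incMatrix_mul_self he₀v, mul_assoc]
  exact mul_mem (incMatrix_mem_bot v e₀) hmul

variable [Fintype G.V]

theorem sum_incMatrix_mulVec (f : G.E → R) : ∑ v, (G.incMatrix R *ᵥ f) v = 0 := by
  simp only [mulVec, dotProduct]
  rw [Finset.sum_comm]
  simp [← Finset.sum_mul, incMatrix_apply, Finset.sum_sub_distrib]

theorem incMatrix_mulVec_eq_zero_of_forall_ne {f : G.E → R} {v₀ : G.V}
    (h : ∀ v ≠ v₀, (G.incMatrix R *ᵥ f) v = 0) : G.incMatrix R *ᵥ f = 0 := by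
  funext v
  by_cases hv : v = v₀
  · have := sum_incMatrix_mulVec (G := G) f
    rwa [← add_sum_erase _ _ (mem_univ v₀), sum_eq_zero fun v hv => h v (ne_of_mem_erase hv),
      add_zero, ← hv] at this
  · exact h v hv

theorem exists_ne_zero_incMatrix_mulVec_eq_zero {K : Type*} [Field K] [DecidableEq K]
    (N : Finset G.E) (hN : N.Nonempty) (hdeg : ∀ v, #{e ∈ N | G.incMatrix K v e ≠ 0} ≠ 1) :
    ∃ c : G.E → K, c ≠ 0 ∧ (∀ e ∉ N, c e = 0) ∧ G.incMatrix K *ᵥ c = 0 := by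
  set W : Finset G.V := {v | ({e ∈ N | G.incMatrix K v e ≠ 0} : Finset G.E).Nonempty}
  have hW (v : G.V) (hv : v ∉ W) (e : G.E) (he : e ∈ N) : G.incMatrix K v e = 0 := by
    by_contra h
    exact hv (mem_filter.2 ⟨mem_univ _, e, mem_filter.2 ⟨he, h⟩⟩)
  rcases W.eq_empty_or_nonempty with hW₀ | ⟨v₀, hv₀⟩
  · -- every edge of `N` is a loop, whose column vanishes
    classical
    obtain ⟨e₀, he₀⟩ := hN
    refine ⟨Pi.single e₀ 1, fun h => one_ne_zero (α := K) (by simpa using congrFun h e₀),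
      fun e he => ?_, funext fun v => ?_⟩
    · simp [show e ≠ e₀ by rintro rfl; exact he he₀]
    · simp [mulVec, dotProduct, Pi.single_apply, hW v (by simp [hW₀]) e₀ he₀]
  -- more columns than rows once the redundant row `v₀` is dropped
  have hdep : ¬ LinearIndependent K fun e : N => fun w : W.erase v₀ => G.incMatrix K w e := by
    intro h
    have := h.fintype_card_le_finrank
    simp only [Module.finrank_fintype_fun_eq_card, Fintype.card_coe,
      card_erase_of_mem hv₀] at this
    have := hN.card_pos
    have hWN : #W ≤ #N := card_filter_nonempty_incMatrix_ne_zero_le N hdeg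
    omega
  obtain ⟨g, hg, i, hi⟩ := Fintype.not_linearIndependent_iff.1 hdep
  classical
  set c : G.E → K := fun e => if h : e ∈ N then g ⟨e, h⟩ else 0
  have hc (v : G.V) : (G.incMatrix K *ᵥ c) v = ∑ e : N, G.incMatrix K v e * g e := by
    rw [mulVec, dotProduct, ← sum_subset (subset_univ N) fun e _ he => by simp [c, he],
      ← sum_coe_sort N]
    simp [c]
  refine ⟨c, fun h => hi (by simpa [c] using congrFun h i), fun e he => by simp [c, he],
    incMatrix_mulVec_eq_zero_of_forall_ne (v₀ := v₀) fun v hv => ?_⟩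
  rw [hc]
  by_cases hvW : v ∈ W
  · have := congrFun hg ⟨v, mem_erase.2 ⟨hv, hvW⟩⟩
    simp only [Finset.sum_apply, Pi.smul_apply, smul_eq_mul, Pi.zero_apply] at this
    simpa [mul_comm] using this
  · exact sum_eq_zero fun e _ => by simp [hW v hvW e e.2]

/-- A fractional edge would make `x` the midpoint of a segment in `G.flowRoundings ψ`, in the
direction of a kernel vector supported on the fractional edges. -/
theorem mem_bot_of_mem_extremePoints_flowRoundings {ψ x : G.E → ℝ}
    (hψ : ∀ v, (G.incMatrix ℝ *ᵥ ψ) v ∈ (⊥ : Subring ℝ))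
    (hx : x ∈ (G.flowRoundings ψ).extremePoints ℝ) : ∀ e, x e ∈ (⊥ : Subring ℝ) := by
  classical
  have hxK := (mem_extremePoints.1 hx).1
  by_contra! hfrac
  set N : Finset G.E := {e | x e ∉ (⊥ : Subring ℝ)}
  have hN (e : G.E) : e ∈ N ↔ x e ∉ (⊥ : Subring ℝ) := by simp [N]
  obtain ⟨c, hc0, hcN, hc⟩ := exists_ne_zero_incMatrix_mulVec_eq_zero N
    (by obtain ⟨e, he⟩ := hfrac; exact ⟨e, (hN e).2 he⟩)
    fun v => card_filter_incMatrix_ne_zero_ne_one_of_mem_bot hN v (hxK.2 ▸ hψ v)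
  have hc' (e : G.E) : c e = 0 ∨ x e ∉ (⊥ : Subring ℝ) :=
    (em (c e = 0)).imp_right fun h => (hN e).1 (not_not.1 (mt (hcN e) h))
  obtain ⟨ε, hε, hε0⟩ := (((eventually_all.2 fun e =>
    (eventually_add_mul_mem_Icc (hxK.1 e trivial) (hc' e)).and
      (eventually_add_mul_mem_Icc (hxK.1 e trivial) ((hc' e).imp neg_eq_zero.2 id))).filter_mono
    nhdsWithin_le_nhds).and (self_mem_nhdsWithin (s := Set.Ioi 0))).exists
  have hmem (δ : ℝ) (hδ : ∀ e, x e + δ * c e ∈ Set.Icc (⌊ψ e⌋ : ℝ) ⌈ψ e⌉) :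
      x + δ • c ∈ G.flowRoundings ψ :=
    ⟨fun e _ => by simpa using hδ e, by simpa [mulVec_add, mulVec_smul, hc] using hxK.2⟩
  have hseg : x ∈ openSegment ℝ (x + (-ε) • c) (x + ε • c) :=
    ⟨1 / 2, 1 / 2, by norm_num, by norm_num, by norm_num, by ext; simp; ring⟩
  have := ((mem_extremePoints.1 hx).2 _ (hmem (-ε) fun e => by simpa using (hε e).2) _
    (hmem ε fun e => (hε e).1) hseg).2
  exact hc0 ((smul_eq_zero.1 (add_eq_left.1 this)).resolve_left (ne_of_gt hε0))

theorem exists_int_incMatrix_mulVec_eq (ψ : G.E → ℝ)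
    (hψ : ∀ v, (G.incMatrix ℝ *ᵥ ψ) v ∈ (⊥ : Subring ℝ)) :
    ∃ ζ : G.E → ℤ, (∀ e, ⌊ψ e⌋ ≤ ζ e ∧ ζ e ≤ ⌈ψ e⌉) ∧
      G.incMatrix ℝ *ᵥ (fun e => (ζ e : ℝ)) = G.incMatrix ℝ *ᵥ ψ := by
  obtain ⟨x, hx⟩ := (isCompact_flowRoundings ψ).extremePoints_nonempty
    ⟨ψ, fun e _ => ⟨Int.floor_le _, Int.le_ceil _⟩, rfl⟩
  have hxK := (mem_extremePoints.1 hx).1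
  choose ζ hζ using fun e => Subring.mem_bot.1 (mem_bot_of_mem_extremePoints_flowRoundings hψ hx e)
  have hxζ : x = fun e => (ζ e : ℝ) := funext fun e => (hζ e).symm
  refine ⟨ζ, fun e => ⟨?_, ?_⟩, hxζ ▸ hxK.2⟩
  · exact_mod_cast (hζ e).symm ▸ (hxK.1 e (Set.mem_univ e)).1
  · exact_mod_cast (hζ e).symm ▸ (hxK.1 e (Set.mem_univ e)).2

/-- `σ e = 1` orients `e` from `G.fst e` to `G.snd e` and `σ e = -1` the other way, so that
`(G.incMatrix ℝ *ᵥ σ) v` is out-degree minus in-degree; `τ` is a fractional orientation. -/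
theorem exists_orientation_incMatrix_mulVec_eq (τ : G.E → ℝ) (hτ : ∀ e, |τ e| ≤ 1)
    (hpar : ∀ v, ∃ n : ℤ, (G.incMatrix ℝ *ᵥ τ) v + G.degree v = 2 * n) :
    ∃ σ : G.E → ℝ, (∀ e, σ e = 1 ∨ σ e = -1) ∧ G.incMatrix ℝ *ᵥ σ = G.incMatrix ℝ *ᵥ τ := by
  set x : G.E → ℝ := fun e => (1 + τ e) / 2
  have hx (v : G.V) : (G.incMatrix ℝ *ᵥ x) v =
      ((G.incMatrix ℝ *ᵥ τ) v + G.degree v) / 2 - #{e | G.snd e = v} := by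
    simp only [incMatrix_mulVec_apply, degree_eq, x, ← sum_div, sum_add_distrib, sum_const,
      nsmul_eq_mul, mul_one]
    push_cast
    ring
  obtain ⟨ζ, hζ, hMζ⟩ := exists_int_incMatrix_mulVec_eq x fun v => by
    obtain ⟨n, hn⟩ := hpar v
    rw [hx, hn, mul_div_cancel_left₀ _ two_ne_zero]
    exact sub_mem (intCast_mem _ n) (natCast_mem _ _)
  have hζ01 (e : G.E) : ζ e = 0 ∨ ζ e = 1 := by
    have := abs_le.1 (hτ e)
    have h0 : 0 ≤ ⌊x e⌋ := Int.floor_nonneg.2 (by simp only [x]; linarith)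
    have h1 : ⌈x e⌉ ≤ 1 := Int.ceil_le.2 (by simp only [x]; push_cast; linarith)
    have := hζ e
    omega
  have hτx : τ = 2 • x - 1 := funext fun e => by
    simp only [x, Pi.sub_apply, Pi.smul_apply, Pi.one_apply]
    ring
  refine ⟨2 • (fun e => (ζ e : ℝ)) - 1, fun e => ?_, ?_⟩
  · rcases hζ01 e with h | h <;> norm_num [h]
  · rw [mulVec_sub, mulVec_smul, hMζ, ← mulVec_smul, ← mulVec_sub, ← hτx]

theorem exists_isOneFactor_of_flow (ht : 1 ≤ t) (hreg : G.IsRegular (2 * t + 1)) (φ : G.E → ℝ)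
    (hφ : ∀ e, 1 ≤ |φ e| ∧ |φ e| ≤ (2 * t + 1) / (2 * t - 1)) (hcons : G.incMatrix ℝ *ᵥ φ = 0) :
    ∃ F : Set G.E, G.IsOneFactor F ∧ G.BipartiteWithout F := by
  have hd : (0 : ℝ) < 2 * t - 1 := by
    have : (1 : ℝ) ≤ t := by exact_mod_cast ht
    linarith
  obtain ⟨ζ, hζ, hMζ⟩ := exists_int_incMatrix_mulVec_eq ((2 * t - 1 : ℝ) • φ) fun v => by
    simp [mulVec_smul, hcons, zero_mem]
  refine exists_isOneFactor_of_int_flow ht hreg ζ (fun e => ?_) (funext fun v => ?_)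
  · refine abs_mem_Icc_of_mem_Icc_floor_ceil (by omega) ?_ (hζ e)
    rw [Pi.smul_apply, smul_eq_mul, abs_mul, abs_of_pos hd]
    push_cast
    constructor
    · nlinarith [(hφ e).1]
    · have := (hφ e).2
      rw [le_div_iff₀ hd] at this
      linarith
  · have := congrFun hMζ v
    rw [← intCast_incMatrix_mulVec, mulVec_smul, hcons, smul_zero, Pi.zero_apply] at this
    exact_mod_cast this

theorem exists_flow_of_isOneFactor (ht : 1 ≤ t) (hreg : G.IsRegular (2 * t + 1)) {F : Set G.E}
    (hF : G.IsOneFactor F) (hbip : G.BipartiteWithout F) :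
    ∃ φ : G.E → ℝ, (∀ e, 1 ≤ |φ e| ∧ |φ e| ≤ (2 * t + 1) / (2 * t - 1)) ∧
      G.incMatrix ℝ *ᵥ φ = 0 := by
  classical
  obtain ⟨c, hc⟩ := hbip
  have hloop (e : G.E) : G.fst e ≠ G.snd e := fun h =>
    if he : e ∈ F then hF.1 e he h else hc e he (congrArg c h)
  have ht' : (1 : ℝ) ≤ t := by exact_mod_cast ht
  have hcard := card_incident_notMem_of_isOneFactor hreg hloop hF
  -- the fractional orientation sending `1 / 2t` along every non-`F` edge from `true` to `false`
  set κ : G.E → ℝ := fun e => if e ∈ F then 0 else if c (G.fst e) then 1 else -1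
  have hκ (e : G.E) : κ e = 0 ∨ κ e = 1 ∨ κ e = -1 := by
    simp only [κ]
    split_ifs <;> simp
  set τ : G.E → ℝ := (2 * t : ℝ)⁻¹ • κ
  have hτ (v : G.V) : (G.incMatrix ℝ *ᵥ τ) v = if c v then 1 else -1 := by
    rw [mulVec_smul, Pi.smul_apply, smul_eq_mul, incMatrix_mulVec_crossing hloop hc, hcard]
    push_cast
    field_simp
  obtain ⟨σ, hσ, hMσ⟩ := exists_orientation_incMatrix_mulVec_eq τ
    (fun e => by
      rw [show τ e = (2 * t : ℝ)⁻¹ * κ e from rfl, abs_mul, abs_inv, abs_of_pos (by positivity)]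
      refine mul_le_one₀ (inv_le_one_of_one_le₀ (by linarith)) (abs_nonneg _) ?_
      rcases hκ e with h | h | h <;> simp [h])
    (fun v => ⟨if c v then t + 1 else t, by rw [hτ, hreg v]; split_ifs <;> push_cast <;> ring⟩)
  have hd : (0 : ℝ) < 2 * t - 1 := by linarith
  refine ⟨(2 * t / (2 * t - 1) : ℝ) • (σ - τ), fun e => ?_,
    by rw [mulVec_smul, mulVec_sub, hMσ, sub_self, smul_zero]⟩
  have hφ : ((2 * t / (2 * t - 1) : ℝ) • (σ - τ)) e = (2 * t * σ e - κ e) / (2 * t - 1) := by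
    simp only [Pi.smul_apply, Pi.sub_apply, smul_eq_mul, τ]
    field_simp
  rw [hφ, abs_div, abs_of_pos hd, le_div_iff₀ hd, one_mul, div_le_div_iff_of_pos_right hd]
  exact abs_two_mul_mul_sub_mem_Icc (by positivity) (hσ e) (hκ e)

end Multigraph

theorem hasNowhereZeroFlow_iff_one_factor_bipartite_complement (t : ℕ) (ht : 1 ≤ t)
    (G : Multigraph) (hreg : G.IsRegular (2 * t + 1)) :
    G.HasNowhereZeroFlow (2 + 2 / (2 * (t : ℝ) - 1)) ↔
      ∃ F : Set G.E, G.IsOneFactor F ∧ G.BipartiteWithout F := by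
  classical
  have : Fintype G.E := Fintype.ofFinite _
  have : Fintype G.V := Fintype.ofFinite _
  have hr : 2 + 2 / (2 * (t : ℝ) - 1) - 1 = (2 * t + 1) / (2 * t - 1) := by
    have : (1 : ℝ) ≤ t := by exact_mod_cast ht
    field_simp [show (2 * t - 1 : ℝ) ≠ 0 by linarith]
    ring
  simp only [Multigraph.HasNowhereZeroFlow, Multigraph.isNowhereZeroFlow_iff, hr]
  constructor
  · rintro ⟨φ, hφ, hcons⟩
    exact Multigraph.exists_isOneFactor_of_flow ht hreg φ hφ hcons
  · rintro ⟨F, hF, hbip⟩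
    exact Multigraph.exists_flow_of_isOneFactor ht hreg hF hbip
end

section
/- Let n, k be integers with 1 ≤ k ≤ n. A finite multigraph G has a nowhere-zero (1 + n/k)-flow if and only if G has a nowhere-zero (1 + n/k)-flow φ such that for each edge e there is an integer m with φ(e) = m/k. -/
open Finset

private lemma fr_bridge {E : Type} [Fintype E] (g : E → ℝ) (p : E → Prop) [DecidablePred p] :
    ∑ᶠ e ∈ {e | p e}, g e = ∑ e ∈ univ.filter p, g e := by
  rw [← finsum_mem_coe_finset]
  congr 1
  ext e; simp

private theorem flow_round {E V : Type} [Fintype E] [Fintype V]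
    (fst snd : E → V) (kk nn : ℤ) (hk : (1:ℤ) ≤ kk) :
    ∀ (N : ℕ) (ψ : E → ℝ),
      Set.ncard {e | ¬ ∃ m : ℤ, ψ e = (m:ℝ)} ≤ N →
      (∀ e, (kk:ℝ) ≤ |ψ e| ∧ |ψ e| ≤ (nn:ℝ)) →
      (∀ v, ∑ᶠ e ∈ {e : E | fst e = v}, ψ e = ∑ᶠ e ∈ {e : E | snd e = v}, ψ e) →
      ∃ ψ' : E → ℝ, (∀ e, (kk:ℝ) ≤ |ψ' e| ∧ |ψ' e| ≤ (nn:ℝ)) ∧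
        (∀ v, ∑ᶠ e ∈ {e : E | fst e = v}, ψ' e = ∑ᶠ e ∈ {e : E | snd e = v}, ψ' e) ∧
        ∀ e, ∃ m : ℤ, ψ' e = (m:ℝ) := by
  classical
  intro N
  induction N with
  | zero =>
    intro ψ hcard hbd hcons
    refine ⟨ψ, hbd, hcons, ?_⟩
    intro e
    by_contra h
    have h1 : e ∈ {e | ¬ ∃ m : ℤ, ψ e = (m:ℝ)} := h
    have h2 : 0 < Set.ncard {e | ¬ ∃ m : ℤ, ψ e = (m:ℝ)} := by
      refine Set.Nonempty.ncard_pos (Set.toFinite _) ⟨e, h1⟩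
    omega
  | succ N ih =>
    intro ψ hcard hbd hcons
    set bad : Finset E := univ.filter (fun e => ¬ ∃ m : ℤ, ψ e = (m:ℝ)) with hbaddef
    have hncard : Set.ncard {e | ¬ ∃ m : ℤ, ψ e = (m:ℝ)} = bad.card := by
      have : {e | ¬ ∃ m : ℤ, ψ e = (m:ℝ)} = ↑bad := by ext e; simp [hbaddef]
      rw [this, Set.ncard_coe_finset]
    rw [hncard] at hcard
    by_cases hsm : Set.ncard {e | ¬ ∃ m : ℤ, ψ e = (m:ℝ)} ≤ N
    · exact ih ψ hsm hbd hcons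
    rw [hncard] at hsm
    have hbadcard : bad.card = N + 1 := by omega
    have hbadne : bad.Nonempty := by rw [← card_pos]; omega
    -- Finset versions of conservation
    have hconsF : ∀ v, ∑ e ∈ univ.filter (fun e => fst e = v), ψ e
        = ∑ e ∈ univ.filter (fun e => snd e = v), ψ e := by
      intro v
      have := hcons v
      rwa [fr_bridge, fr_bridge] at this
    -- the subgroup of integers in ℝ
    set ZZ : AddSubgroup ℝ := AddSubgroup.zmultiples (1:ℝ) with hZZ
    have hZiff : ∀ x : ℝ, x ∈ ZZ ↔ ∃ m : ℤ, x = (m:ℝ) := by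
      intro x
      simp [hZZ, AddSubgroup.mem_zmultiples_iff, eq_comm]
    have hnotbad : ∀ e, e ∉ bad → ψ e ∈ ZZ := by
      intro e he
      rw [hZiff]
      by_contra h
      exact he (mem_filter.mpr ⟨mem_univ _, h⟩)
    have hinbad : ∀ e ∈ bad, ¬ ∃ m : ℤ, ψ e = (m:ℝ) := by
      intro e he
      simpa [hbaddef] using he
    set VB : Finset V := univ.filter (fun v => ∃ e ∈ bad, fst e = v ∨ snd e = v) with hVBdef
    have hmemVBf : ∀ e ∈ bad, fst e ∈ VB := by
      intro e he; simp only [hVBdef, mem_filter, mem_univ, true_and]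
      exact ⟨e, he, Or.inl rfl⟩
    have hmemVBs : ∀ e ∈ bad, snd e ∈ VB := by
      intro e he; simp only [hVBdef, mem_filter, mem_univ, true_and]
      exact ⟨e, he, Or.inr rfl⟩
    -- every vertex of VB has at least two incidences with bad edges
    have deg2 : ∀ v ∈ VB, 2 ≤ (bad.filter (fun e => fst e = v)).card
        + (bad.filter (fun e => snd e = v)).card := by
      intro v hv
      by_contra hlt
      push_neg at hlt
      obtain ⟨e₀, he₀bad, he₀inc⟩ := (mem_filter.mp hv).2
      have hsplit : ∀ f : E → V, ∑ e ∈ univ.filter (fun e => f e = v), ψ e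
          = ∑ e ∈ bad.filter (fun e => f e = v), ψ e
            + ∑ e ∈ (univ.filter (fun e => f e = v)) \ bad, ψ e := by
        intro f
        rw [← Finset.sum_inter_add_sum_sdiff (univ.filter (fun e => f e = v)) bad ψ]
        congr 2
        ext e; simp [and_comm]
      have hdiffZ : ∀ f : E → V,
          ∑ e ∈ (univ.filter (fun e => f e = v)) \ bad, ψ e ∈ ZZ := by
        intro f
        exact AddSubgroup.sum_mem _ (fun e he => hnotbad e (mem_sdiff.mp he).2)
      have hkey : (∑ e ∈ bad.filter (fun e => fst e = v), ψ e)
          - (∑ e ∈ bad.filter (fun e => snd e = v), ψ e) ∈ ZZ := by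
        have h1 := hsplit fst
        have h2 := hsplit snd
        have hc := hconsF v
        have heq : (∑ e ∈ bad.filter (fun e => fst e = v), ψ e)
            - (∑ e ∈ bad.filter (fun e => snd e = v), ψ e)
            = (∑ e ∈ (univ.filter (fun e => snd e = v)) \ bad, ψ e)
              - (∑ e ∈ (univ.filter (fun e => fst e = v)) \ bad, ψ e) := by
          linarith
        rw [heq]
        exact sub_mem (hdiffZ snd) (hdiffZ fst)
      rcases he₀inc with h | h
      · have hm : e₀ ∈ bad.filter (fun e => fst e = v) := mem_filter.mpr ⟨he₀bad, h⟩
        have ha : 1 ≤ (bad.filter (fun e => fst e = v)).card := card_pos.mpr ⟨e₀, hm⟩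
        have hb : (bad.filter (fun e => snd e = v)).card = 0 := by omega
        have ha' : (bad.filter (fun e => fst e = v)).card = 1 := by omega
        obtain ⟨x, hx⟩ := card_eq_one.mp ha'
        have hxe : x = e₀ := by
          have := hm; rw [hx] at this; exact (mem_singleton.mp this).symm
        rw [hx, hxe, card_eq_zero.mp hb] at hkey
        simp only [sum_singleton, sum_empty, sub_zero] at hkey
        exact hinbad e₀ he₀bad ((hZiff _).mp hkey)
      · have hm : e₀ ∈ bad.filter (fun e => snd e = v) := mem_filter.mpr ⟨he₀bad, h⟩
        have hb : 1 ≤ (bad.filter (fun e => snd e = v)).card := card_pos.mpr ⟨e₀, hm⟩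
        have ha : (bad.filter (fun e => fst e = v)).card = 0 := by omega
        have hb' : (bad.filter (fun e => snd e = v)).card = 1 := by omega
        obtain ⟨x, hx⟩ := card_eq_one.mp hb'
        have hxe : x = e₀ := by
          have := hm; rw [hx] at this; exact (mem_singleton.mp this).symm
        rw [hx, hxe, card_eq_zero.mp ha] at hkey
        simp only [sum_singleton, sum_empty, zero_sub] at hkey
        have := neg_mem hkey
        simp only [neg_neg] at this
        exact hinbad e₀ he₀bad ((hZiff _).mp this)
    -- |VB| ≤ |bad|
    have hVBcard : VB.card ≤ bad.card := by
      have h1 : bad.card = ∑ v ∈ VB, (bad.filter (fun e => fst e = v)).card :=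
        card_eq_sum_card_fiberwise hmemVBf
      have h2 : bad.card = ∑ v ∈ VB, (bad.filter (fun e => snd e = v)).card :=
        card_eq_sum_card_fiberwise hmemVBs
      have h3 : ∑ _v ∈ VB, 2
          ≤ ∑ v ∈ VB, ((bad.filter (fun e => fst e = v)).card
            + (bad.filter (fun e => snd e = v)).card) := sum_le_sum deg2
      rw [Finset.sum_add_distrib, ← h1, ← h2, Finset.sum_const, smul_eq_mul] at h3
      omega
    -- the incidence matrix on bad edges and touched vertices
    set A : Matrix {v // v ∈ VB} {e // e ∈ bad} ℝ :=
      fun v e => (if fst e.1 = v.1 then (1:ℝ) else 0) - (if snd e.1 = v.1 then (1:ℝ) else 0)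
      with hA
    have hrowsum : ∀ e : {e // e ∈ bad}, ∑ v : {v // v ∈ VB}, A v e = 0 := by
      intro e
      rw [hA]
      simp only
      rw [Finset.sum_sub_distrib]
      rw [← Finset.sum_subtype VB (fun _ => Iff.rfl) (fun v => if fst e.1 = v then (1:ℝ) else 0),
          ← Finset.sum_subtype VB (fun _ => Iff.rfl) (fun v => if snd e.1 = v then (1:ℝ) else 0)]
      rw [Finset.sum_ite_eq, Finset.sum_ite_eq]
      simp [hmemVBf e.1 e.2, hmemVBs e.1 e.2]
    have hnotinj : ¬ Function.Injective A.mulVecLin := by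
      intro hinj
      have hle := LinearMap.finrank_le_finrank_of_injective hinj
      rw [Module.finrank_pi ℝ, Module.finrank_pi ℝ, Fintype.card_coe, Fintype.card_coe] at hle
      have hcardeq : Module.finrank ℝ ({e // e ∈ bad} → ℝ)
          = Module.finrank ℝ ({v // v ∈ VB} → ℝ) := by
        rw [Module.finrank_pi ℝ, Module.finrank_pi ℝ, Fintype.card_coe, Fintype.card_coe]
        omega
      have hsurj : Function.Surjective A.mulVecLin :=
        (LinearMap.injective_iff_surjective_of_finrank_eq_finrank hcardeq).mp hinj
      obtain ⟨c₁, hc₁⟩ := hsurj (fun _ => 1)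
      have hVBne : VB.Nonempty := by
        obtain ⟨e, he⟩ := hbadne; exact ⟨fst e, hmemVBf e he⟩
      have hzero : ∑ v : {v // v ∈ VB}, (A.mulVecLin c₁) v = 0 := by
        simp only [Matrix.mulVecLin_apply, Matrix.mulVec, dotProduct]
        rw [Finset.sum_comm]
        refine Finset.sum_eq_zero (fun e _ => ?_)
        rw [← Finset.sum_mul, hrowsum e, zero_mul]
      rw [hc₁] at hzero
      simp only [Finset.sum_const, card_univ, Fintype.card_coe, nsmul_eq_mul, mul_one] at hzero
      have h0 : VB.card = 0 := by exact_mod_cast hzero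
      have := card_pos.mpr hVBne
      omega
    -- extract a nonzero circulation supported on bad edges
    rw [injective_iff_map_eq_zero] at hnotinj
    push_neg at hnotinj
    obtain ⟨c, hc0, hcne⟩ := hnotinj
    set cE : E → ℝ := fun e => if h : e ∈ bad then c ⟨e, h⟩ else 0 with hcE
    have hcEbad : ∀ e, e ∉ bad → cE e = 0 := by
      intro e he; simp [hcE, he]
    have hcEc : ∀ e : {e // e ∈ bad}, cE e.1 = c e := by
      intro e; simp [hcE, e.2]
    -- reduction of vertex sums to sums over bad
    have hsum_red : ∀ (f : E → V) (v : V), ∑ e ∈ univ.filter (fun e => f e = v), cE e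
        = ∑ e ∈ bad, (if f e = v then cE e else 0) := by
      intro f v
      rw [Finset.sum_filter]
      exact (Finset.sum_subset (subset_univ bad) (fun e _ henb => by
        simp [hcEbad e henb])).symm
    -- cE is a circulation
    have ccons : ∀ v, ∑ e ∈ univ.filter (fun e => fst e = v), cE e
        = ∑ e ∈ univ.filter (fun e => snd e = v), cE e := by
      intro v
      rw [hsum_red, hsum_red]
      by_cases hv : v ∈ VB
      · have hvz := congrFun hc0 ⟨v, hv⟩
        simp only [Matrix.mulVecLin_apply, Matrix.mulVec, dotProduct, Pi.zero_apply] at hvz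
        have hconv : ∑ e : {e // e ∈ bad}, A ⟨v, hv⟩ e * c e
            = ∑ e ∈ bad, ((if fst e = v then cE e else 0) - (if snd e = v then cE e else 0)) := by
          rw [Finset.sum_subtype bad (fun _ => Iff.rfl)
            (fun e => (if fst e = v then cE e else 0) - (if snd e = v then cE e else 0))]
          refine Finset.sum_congr rfl (fun e _ => ?_)
          rw [hA]
          simp only
          rw [hcEc e]
          split_ifs <;> ring
        rw [hconv] at hvz
        rw [Finset.sum_sub_distrib] at hvz
        linarith
      · have hz : ∀ (f : E → V), (∀ e ∈ bad, f e ∈ VB) →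
            ∑ e ∈ bad, (if f e = v then cE e else 0) = 0 := by
          intro f hf
          refine Finset.sum_eq_zero (fun e he => ?_)
          split_ifs with h
          · exact absurd (h ▸ hf e he) hv
          · rfl
        rw [hz fst hmemVBf, hz snd hmemVBs]
    -- support of the circulation
    set supp : Finset E := univ.filter (fun e => cE e ≠ 0) with hsuppdef
    have hsuppB : supp ⊆ bad := by
      intro e he
      by_contra hnb
      exact (mem_filter.mp he).2 (hcEbad e hnb)
    have hsuppne : supp.Nonempty := by
      by_contra hemp
      rw [not_nonempty_iff_eq_empty] at hemp
      apply hcne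
      funext e
      have : cE e.1 = 0 := by
        by_contra h
        have : e.1 ∈ supp := mem_filter.mpr ⟨mem_univ _, h⟩
        rw [hemp] at this
        exact absurd this (notMem_empty _)
      rw [← hcEc e, this]; rfl
    -- floor/ceil facts on bad edges
    have hfloor : ∀ e ∈ bad, (⌊ψ e⌋ : ℝ) < ψ e := by
      intro e he
      rcases eq_or_lt_of_le (Int.floor_le (ψ e)) with h | h
      · exact absurd ⟨⌊ψ e⌋, h.symm⟩ (hinbad e he)
      · exact h
    have hceil : ∀ e ∈ bad, ψ e < (⌈ψ e⌉ : ℝ) := by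
      intro e he
      rcases eq_or_lt_of_le (Int.le_ceil (ψ e)) with h | h
      · exact absurd ⟨⌈ψ e⌉, h⟩ (hinbad e he)
      · exact h
    set D : E → ℝ := fun e => if 0 < cE e then (⌈ψ e⌉ : ℝ) - ψ e else ψ e - (⌊ψ e⌋ : ℝ)
      with hD
    have hDpos : ∀ e ∈ supp, 0 < D e := by
      intro e he
      rw [hD]
      simp only
      split_ifs
      · linarith [hceil e (hsuppB he)]
      · linarith [hfloor e (hsuppB he)]
    set ratio : E → ℝ := fun e => D e / |cE e| with hratio
    have hratiopos : ∀ e ∈ supp, 0 < ratio e := by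
      intro e he
      exact div_pos (hDpos e he) (abs_pos.mpr (mem_filter.mp he).2)
    obtain ⟨estar, hestar, hmin⟩ := Finset.exists_min_image supp ratio hsuppne
    set θ : ℝ := ratio estar with hθ
    have hθpos : 0 < θ := hratiopos estar hestar
    set ψ' : E → ℝ := fun e => ψ e + θ * cE e with hψ'
    have hoff : ∀ e, e ∉ supp → ψ' e = ψ e := by
      intro e he
      have : cE e = 0 := by
        by_contra h
        exact he (mem_filter.mpr ⟨mem_univ _, h⟩)
      simp [hψ', this]
    have hbound : ∀ e ∈ supp, |θ * cE e| ≤ D e := by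
      intro e he
      rw [abs_mul, abs_of_pos hθpos]
      have h1 : θ ≤ ratio e := hmin e he
      have h2 : θ * |cE e| ≤ ratio e * |cE e| :=
        mul_le_mul_of_nonneg_right h1 (abs_nonneg _)
      rwa [hratio, div_mul_cancel₀ _ (by exact abs_ne_zero.mpr (mem_filter.mp he).2)] at h2
    have hinterval : ∀ e ∈ supp, (⌊ψ e⌋ : ℝ) ≤ ψ' e ∧ ψ' e ≤ (⌈ψ e⌉ : ℝ) := by
      intro e he
      have hb := hbound e he
      rw [abs_le] at hb
      have hfl := Int.floor_le (ψ e)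
      have hcl := Int.le_ceil (ψ e)
      by_cases hpos : 0 < cE e
      · have hDe : D e = (⌈ψ e⌉ : ℝ) - ψ e := by rw [hD]; simp [hpos]
        rw [hDe] at hb
        have : 0 < θ * cE e := mul_pos hθpos hpos
        constructor
        · simp only [hψ']; linarith
        · simp only [hψ']; linarith
      · have hDe : D e = ψ e - (⌊ψ e⌋ : ℝ) := by rw [hD]; simp [hpos]
        rw [hDe] at hb
        have hneg : cE e < 0 :=
          lt_of_le_of_ne (not_lt.mp hpos) (mem_filter.mp he).2
        have : θ * cE e < 0 := mul_neg_of_pos_of_neg hθpos hneg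
        constructor
        · simp only [hψ']; linarith
        · simp only [hψ']; linarith
    -- bounds preserved
    have hbd' : ∀ e, (kk:ℝ) ≤ |ψ' e| ∧ |ψ' e| ≤ (nn:ℝ) := by
      intro e
      by_cases hs : e ∈ supp
      · obtain ⟨hl, hr⟩ := hinterval e hs
        obtain ⟨h1, h2⟩ := hbd e
        have hk1 : (1:ℝ) ≤ (kk:ℝ) := by exact_mod_cast hk
        by_cases hpos : 0 < ψ e
        · rw [abs_of_pos hpos] at h1 h2
          have hfk : (kk:ℝ) ≤ (⌊ψ e⌋ : ℝ) := by
            exact_mod_cast Int.le_floor.mpr (by exact_mod_cast h1)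
          have hcn : (⌈ψ e⌉ : ℝ) ≤ (nn:ℝ) := by
            exact_mod_cast Int.ceil_le.mpr (by exact_mod_cast h2)
          have hp' : 0 < ψ' e := by linarith
          rw [abs_of_pos hp']
          constructor <;> linarith
        · have hne : ψ e < 0 := by
            rcases lt_trichotomy (ψ e) 0 with h | h | h
            · exact h
            · rw [h] at h1; simp at h1; linarith
            · exact absurd h hpos
          rw [abs_of_neg hne] at h1 h2
          have hcn : (⌈ψ e⌉ : ℝ) ≤ -(kk:ℝ) := by
            have : ψ e ≤ ((-kk : ℤ) : ℝ) := by push_cast; linarith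
            have := Int.ceil_le.mpr this
            calc (⌈ψ e⌉ : ℝ) ≤ ((-kk : ℤ) : ℝ) := by exact_mod_cast this
              _ = -(kk:ℝ) := by push_cast; ring
          have hfk : -(nn:ℝ) ≤ (⌊ψ e⌋ : ℝ) := by
            have : ((-nn : ℤ) : ℝ) ≤ ψ e := by push_cast; linarith
            have := Int.le_floor.mpr this
            calc -(nn:ℝ) = ((-nn : ℤ) : ℝ) := by push_cast; ring
              _ ≤ (⌊ψ e⌋ : ℝ) := by exact_mod_cast this
          have hn' : ψ' e < 0 := by linarith
          rw [abs_of_neg hn']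
          constructor <;> linarith
      · rw [hoff e hs]; exact hbd e
    -- estar becomes integral
    have hint_estar : ∃ m : ℤ, ψ' estar = (m:ℝ) := by
      have hcne' : cE estar ≠ 0 := (mem_filter.mp hestar).2
      by_cases hpos : 0 < cE estar
      · refine ⟨⌈ψ estar⌉, ?_⟩
        have habs : |cE estar| = cE estar := abs_of_pos hpos
        have hDe : D estar = (⌈ψ estar⌉ : ℝ) - ψ estar := by rw [hD]; simp [hpos]
        have : θ * cE estar = D estar := by
          rw [hθ, hratio]
          simp only
          rw [habs, div_mul_cancel₀ _ hcne']
        simp only [hψ']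
        rw [this, hDe]; ring
      · refine ⟨⌊ψ estar⌋, ?_⟩
        have hneg : cE estar < 0 := lt_of_le_of_ne (not_lt.mp hpos) hcne'
        have habs : |cE estar| = -cE estar := abs_of_neg hneg
        have hDe : D estar = ψ estar - (⌊ψ estar⌋ : ℝ) := by rw [hD]; simp [hpos]
        have : θ * cE estar = -D estar := by
          rw [hθ, hratio]
          simp only
          rw [habs, div_neg, neg_mul, div_mul_cancel₀ _ hcne']
        simp only [hψ']
        rw [this, hDe]; ring
    -- conservation preserved
    have hcons' : ∀ v, ∑ᶠ e ∈ {e : E | fst e = v}, ψ' e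
        = ∑ᶠ e ∈ {e : E | snd e = v}, ψ' e := by
      intro v
      rw [fr_bridge, fr_bridge]
      simp only [hψ']
      rw [Finset.sum_add_distrib, Finset.sum_add_distrib, ← Finset.mul_sum, ← Finset.mul_sum,
        hconsF v, ccons v]
    -- the bad set shrinks
    have hcard' : Set.ncard {e | ¬ ∃ m : ℤ, ψ' e = (m:ℝ)} ≤ N := by
      have hsub : univ.filter (fun e => ¬ ∃ m : ℤ, ψ' e = (m:ℝ)) ⊆ bad.erase estar := by
        intro e he
        have he' := (mem_filter.mp he).2
        rw [mem_erase]
        constructor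
        · rintro rfl
          exact he' hint_estar
        · by_contra hnb
          have h1 : e ∉ supp := fun hs => hnb (hsuppB hs)
          rw [hoff e h1] at he'
          exact he' ((hZiff _).mp (hnotbad e hnb))
      have h1 : {e | ¬ ∃ m : ℤ, ψ' e = (m:ℝ)}.ncard
          = (univ.filter (fun e => ¬ ∃ m : ℤ, ψ' e = (m:ℝ))).card := by
        have : {e | ¬ ∃ m : ℤ, ψ' e = (m:ℝ)}
            = ↑(univ.filter (fun e => ¬ ∃ m : ℤ, ψ' e = (m:ℝ))) := by ext e; simp
        rw [this, Set.ncard_coe_finset]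
      rw [h1]
      have h2 := card_le_card hsub
      have h3 : (bad.erase estar).card = bad.card - 1 :=
        card_erase_of_mem (hsuppB hestar)
      omega
    exact ih ψ' hcard' hbd' hcons'


theorem hasNowhereZeroFlow_iff_exists_flow_with_denominator (n k : ℕ)
    (hk : 1 ≤ k) (hkn : k ≤ n) (G : Multigraph) :
    G.HasNowhereZeroFlow (1 + (n : ℝ) / (k : ℝ)) ↔
      ∃ φ : G.E → ℝ, G.IsNowhereZeroFlow (1 + (n : ℝ) / (k : ℝ)) φ ∧
        ∀ e : G.E, ∃ m : ℤ, φ e = (m : ℝ) / (k : ℝ) := by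
  classical
  constructor
  · rintro ⟨φ, hφbd, hφcons⟩
    letI : Fintype G.E := Fintype.ofFinite _
    letI : Fintype G.V := Fintype.ofFinite _
    have hkpos : (0:ℝ) < (k:ℝ) := by exact_mod_cast hk
    have hr1 : (1 + (n : ℝ) / (k : ℝ)) - 1 = (n:ℝ) / (k:ℝ) := by ring
    rw [hr1] at hφbd
    set ψ : G.E → ℝ := fun e => (k:ℝ) * φ e with hψdef
    have hψbd : ∀ e, (((k:ℤ)):ℝ) ≤ |ψ e| ∧ |ψ e| ≤ (((n:ℤ)):ℝ) := by
      intro e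
      obtain ⟨h1, h2⟩ := hφbd e
      have habs : |ψ e| = (k:ℝ) * |φ e| := by
        rw [hψdef]; simp only
        rw [abs_mul, abs_of_pos hkpos]
      constructor
      · rw [habs]; push_cast
        calc (k:ℝ) = (k:ℝ) * 1 := by ring
          _ ≤ (k:ℝ) * |φ e| := by
            exact mul_le_mul_of_nonneg_left h1 (le_of_lt hkpos)
      · rw [habs]; push_cast
        calc (k:ℝ) * |φ e| ≤ (k:ℝ) * ((n:ℝ) / (k:ℝ)) :=
            mul_le_mul_of_nonneg_left h2 (le_of_lt hkpos)
          _ = (n:ℝ) := by field_simp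
    have hψcons : ∀ v, ∑ᶠ e ∈ {e : G.E | G.fst e = v}, ψ e
        = ∑ᶠ e ∈ {e : G.E | G.snd e = v}, ψ e := by
      intro v
      have := hφcons v
      rw [fr_bridge, fr_bridge] at this ⊢
      rw [hψdef]
      simp only
      rw [← Finset.mul_sum, ← Finset.mul_sum, this]
    obtain ⟨ψ', hbd', hcons', hint'⟩ := flow_round G.fst G.snd (k:ℤ) (n:ℤ)
      (by exact_mod_cast hk) (Set.ncard {e | ¬ ∃ m : ℤ, ψ e = (m:ℝ)}) ψ le_rfl hψbd hψcons
    refine ⟨fun e => ψ' e / (k:ℝ), ⟨?_, ?_⟩, ?_⟩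
    · intro e
      obtain ⟨h1, h2⟩ := hbd' e
      have habs : |ψ' e / (k:ℝ)| = |ψ' e| / (k:ℝ) := by
        rw [abs_div, abs_of_pos hkpos]
      push_cast at h1 h2
      constructor
      · rw [habs]
        rw [le_div_iff₀ hkpos]
        linarith
      · rw [hr1, habs]
        exact div_le_div_of_nonneg_right h2 (le_of_lt hkpos)
    · intro v
      rw [fr_bridge, fr_bridge]
      have := hcons' v
      rw [fr_bridge, fr_bridge] at this
      rw [← Finset.sum_div, ← Finset.sum_div, this]
    · intro e
      obtain ⟨m, hm⟩ := hint' e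
      exact ⟨m, by simp only []; rw [hm]⟩
  · rintro ⟨φ, hφ, _⟩
    exact ⟨φ, hφ⟩
end

section
/- Let k ≥ 0 be an integer and let P be the Petersen graph. If G is a (k+3)-regular multigraph obtained from P by adding (parallel copies of) k 1-factors of P (i.e., V(G) = V(P) and E(G) is the disjoint union of E(P) with copies of the edge sets of k perfect matchings of P), then G is a class 2 graph. -/
/-- Vertices of the Petersen graph: 2-element subsets of a 5-element set. -/
abbrev PetersenVertex : Type := {s : Finset (Fin 5) // s.card = 2}

/-- The Petersen graph as the Kneser graph `K(5,2)`: two 2-subsets are adjacent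
iff they are disjoint. -/
def petersen : SimpleGraph PetersenVertex where
  Adj a b := Disjoint a.1 b.1
  symm := ⟨fun _ _ h => Disjoint.symm h⟩
  loopless := by
    constructor
    intro a h
    rw [disjoint_self] at h
    have := a.2
    simp [h] at this

/-- The Petersen graph viewed as a multigraph; each edge `e` gets the two ends of
a (fixed) representative of the unordered pair `e`. -/
noncomputable def petersenMultigraph : Multigraph where
  V := PetersenVertex
  E := ↥petersen.edgeSet
  fst e := (Quot.out e.val).1
  snd e := (Quot.out e.val).2

/-- The multigraph obtained from the Petersen graph by adding (a parallel copy of the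
edge set of) each of the `k` subgraphs `M i`: the vertex set is that of the Petersen
graph and the edges are the disjoint union of the edges of the Petersen graph with
copies of the edge sets of the `M i`. -/
noncomputable def petersenPlusMatchings (k : ℕ) (M : Fin k → petersen.Subgraph) :
    Multigraph where
  V := PetersenVertex
  E := ↥petersen.edgeSet ⊕ (Σ i : Fin k, ↥(M i).edgeSet)
  fst := Sum.elim (fun e => (Quot.out e.val).1) (fun p => (Quot.out p.2.val).1)
  snd := Sum.elim (fun e => (Quot.out e.val).2) (fun p => (Quot.out p.2.val).2)


/-!
A proper `(k + 3)`-edge-colouring of the `(k + 3)`-regular multigraph splits its edges into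
`k + 3` colour classes, each of which is a perfect matching of the Petersen graph. The three
Petersen edges of `Petersen.triad` meet every perfect matching in an even number of edges, so
their total multiplicity is even when counted colour class by colour class. Counted directly it
is `3 + ∑ᵢ #(triad ∩ Mᵢ)`, which is odd because every `Mᵢ` is itself a perfect matching.
-/

open Finset

namespace Multigraph

variable {G : Multigraph}

def ends (G : Multigraph) (e : G.E) : Sym2 G.V := s(G.fst e, G.snd e)

def Loopless (G : Multigraph) : Prop := ∀ e, G.fst e ≠ G.snd e

theorem mem_ends {v : G.V} {e : G.E} : v ∈ G.ends e ↔ G.fst e = v ∨ G.snd e = v := by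
  simp only [ends, Sym2.mem_iff, eq_comm]

theorem Loopless.degree_eq_card_mem_ends (hG : G.Loopless) (v : G.V) :
    G.degree v = Nat.card {e // v ∈ G.ends e} := by
  have hdisj : Disjoint (fun e => G.fst e = v) (fun e => G.snd e = v) :=
    Pi.disjoint_iff.mpr fun e => Prop.disjoint_iff.mpr fun h => hG e (h.1.trans h.2.symm)
  classical
  simp only [mem_ends]
  rw [Nat.card_congr (subtypeOrEquiv _ _ hdisj), Nat.card_sum, degree]

theorem loopless_of_ends_mem_edgeSet {H : SimpleGraph G.V} (hH : ∀ e, G.ends e ∈ H.edgeSet) :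
    G.Loopless :=
  fun e h => H.not_isDiag_of_mem_edgeSet (hH e) (Sym2.mk_isDiag_iff.mpr h)

theorem exists_isProperEdgeColoring_of_edgeChromaticNumber_le {n : ℕ}
    (h : G.edgeChromaticNumber ≤ n) : ∃ c : G.E → Fin n, G.IsProperEdgeColoring c := by
  have hne : {n : ℕ | ∃ c : G.E → Fin n, G.IsProperEdgeColoring c}.Nonempty := by
    obtain ⟨m, ⟨e⟩⟩ := Finite.exists_equiv_fin G.E
    exact ⟨m, e, fun e₁ e₂ hne _ h => hne (e.injective h)⟩
  obtain ⟨c, hc⟩ := Nat.sInf_mem hne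
  exact ⟨Fin.castLE h ∘ c, fun e₁ e₂ hne hshare h' =>
    hc e₁ e₂ hne hshare (Fin.castLE_injective _ h')⟩

variable {n : ℕ} {c : G.E → Fin n}

theorem IsProperEdgeColoring.eq_of_mem_ends (hc : G.IsProperEdgeColoring c) {v : G.V}
    {e₁ e₂ : G.E} (h₁ : v ∈ G.ends e₁) (h₂ : v ∈ G.ends e₂) (h : c e₁ = c e₂) : e₁ = e₂ := by
  by_contra hne
  rw [mem_ends] at h₁ h₂
  exact hc e₁ e₂ hne (by grind) h

theorem IsProperEdgeColoring.exists_mem_ends_color_eq (hc : G.IsProperEdgeColoring c)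
    (hG : G.Loopless) (hreg : G.IsRegular n) (v : G.V) (j : Fin n) :
    ∃ e, v ∈ G.ends e ∧ c e = j := by
  let color : {e // v ∈ G.ends e} → Fin n := fun e => c e
  have hinj : color.Injective := fun e₁ e₂ h => Subtype.ext (hc.eq_of_mem_ends e₁.2 e₂.2 h)
  have hcard : Nat.card {e // v ∈ G.ends e} = Nat.card (Fin n) := by
    rw [← hG.degree_eq_card_mem_ends, hreg v, Nat.card_fin]
  obtain ⟨e, he⟩ := ((Nat.bijective_iff_injective_and_card color).mpr ⟨hinj, hcard⟩).surjective j
  exact ⟨e, e.2, he⟩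

variable (c) in
def colorClass (j : Fin n) : SimpleGraph G.V :=
  SimpleGraph.fromEdgeSet (G.ends '' {e | c e = j})

theorem mem_edgeSet_colorClass (hG : G.Loopless) {j : Fin n} {ε : Sym2 G.V} :
    ε ∈ (colorClass c j).edgeSet ↔ ∃ e, c e = j ∧ G.ends e = ε := by
  simp only [colorClass, SimpleGraph.edgeSet_fromEdgeSet, Set.mem_sdiff, Set.mem_image,
    Set.mem_ofPred_eq, Sym2.mem_diagSet]
  refine ⟨And.left, ?_⟩
  rintro ⟨e, hj, rfl⟩
  exact ⟨⟨e, hj, rfl⟩, Sym2.mk_isDiag_iff.not.mpr (hG e)⟩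

variable (c) in
theorem colorClass_le {H : SimpleGraph G.V} (hH : ∀ e, G.ends e ∈ H.edgeSet) (j : Fin n) :
    colorClass c j ≤ H := by
  intro v w h
  obtain ⟨⟨e, -, he⟩, -⟩ := h
  rw [← SimpleGraph.mem_edgeSet, ← he]
  exact hH e

theorem IsProperEdgeColoring.isPerfectMatching_colorClass {H : SimpleGraph G.V}
    (hc : G.IsProperEdgeColoring c) (hH : ∀ e, G.ends e ∈ H.edgeSet) (hreg : G.IsRegular n)
    (j : Fin n) :
    (SimpleGraph.toSubgraph (colorClass c j) (colorClass_le c hH j)).IsPerfectMatching := by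
  have hG := loopless_of_ends_mem_edgeSet hH
  rw [SimpleGraph.Subgraph.isPerfectMatching_iff]
  intro v
  obtain ⟨e, hv, rfl⟩ := hc.exists_mem_ends_color_eq hG hreg v j
  have hother := Sym2.other_spec hv
  refine ⟨Sym2.Mem.other hv, ⟨⟨e, rfl, hother.symm⟩, fun h => hG e ?_⟩, fun w hw => ?_⟩
  · change (G.ends e).IsDiag
    rw [← hother, ← h]
    exact Sym2.mk_isDiag_iff.mpr rfl
  · obtain ⟨⟨e', he', hvw⟩, -⟩ := hw
    have : e' = e := hc.eq_of_mem_ends (hvw ▸ Sym2.mem_mk_left v w) hv he'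
    rw [← Sym2.congr_right, hother, ← hvw, this]

open Classical in
theorem IsProperEdgeColoring.card_ends_eq_card_colorClass (hc : G.IsProperEdgeColoring c)
    (hG : G.Loopless) (ε : Sym2 G.V) :
    Nat.card {e // G.ends e = ε} = #{j | ε ∈ (colorClass c j).edgeSet} := by
  rw [← Fintype.card_subtype, ← Nat.card_eq_fintype_card]
  refine Nat.card_congr (Equiv.ofBijective
    (fun e => ⟨c e, (mem_edgeSet_colorClass hG).mpr ⟨e, rfl, e.2⟩⟩) ⟨?_, ?_⟩)
  · rintro ⟨e₁, h₁⟩ ⟨e₂, h₂⟩ h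
    have hv : G.fst e₁ ∈ G.ends e₂ := h₂ ▸ h₁ ▸ mem_ends.mpr (Or.inl rfl)
    exact Subtype.ext (hc.eq_of_mem_ends (mem_ends.mpr (Or.inl rfl)) hv (congrArg Subtype.val h))
  · rintro ⟨j, hj⟩
    obtain ⟨e, rfl, he⟩ := (mem_edgeSet_colorClass hG).mp hj
    exact ⟨⟨e, he⟩, rfl⟩

open Classical in
theorem IsProperEdgeColoring.even_sum_card_ends {H : SimpleGraph G.V} {T : Finset (Sym2 G.V)}
    (hT : ∀ M : H.Subgraph, M.IsPerfectMatching → Even #{ε ∈ T | ε ∈ M.edgeSet})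
    (hc : G.IsProperEdgeColoring c) (hH : ∀ e, G.ends e ∈ H.edgeSet) (hreg : G.IsRegular n) :
    Even (∑ ε ∈ T, Nat.card {e // G.ends e = ε}) := by
  have hswap : ∑ ε ∈ T, #{j | ε ∈ (colorClass c j).edgeSet} =
      ∑ j, #{ε ∈ T | ε ∈ (colorClass c j).edgeSet} :=
    sum_card_bipartiteAbove_eq_sum_card_bipartiteBelow _
  simp only [hc.card_ends_eq_card_colorClass (loopless_of_ends_mem_edgeSet hH), hswap]
  refine even_sum _ fun j _ => ?_
  convert hT _ (hc.isPerfectMatching_colorClass hH hreg j) using 4 <;> rfl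

end Multigraph

namespace Petersen

instance : DecidableRel petersen.Adj :=
  fun a b => inferInstanceAs (Decidable (Disjoint a.1 b.1))

def v01 : PetersenVertex := ⟨{0, 1}, rfl⟩
def v02 : PetersenVertex := ⟨{0, 2}, rfl⟩
def v03 : PetersenVertex := ⟨{0, 3}, rfl⟩
def v04 : PetersenVertex := ⟨{0, 4}, rfl⟩
def v12 : PetersenVertex := ⟨{1, 2}, rfl⟩
def v13 : PetersenVertex := ⟨{1, 3}, rfl⟩
def v14 : PetersenVertex := ⟨{1, 4}, rfl⟩
def v23 : PetersenVertex := ⟨{2, 3}, rfl⟩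
def v24 : PetersenVertex := ⟨{2, 4}, rfl⟩
def v34 : PetersenVertex := ⟨{3, 4}, rfl⟩

theorem adj_v01 : ∀ w, petersen.Adj v01 w → w = v23 ∨ w = v24 ∨ w = v34 := by decide
theorem adj_v02 : ∀ w, petersen.Adj v02 w → w = v13 ∨ w = v14 ∨ w = v34 := by decide
theorem adj_v03 : ∀ w, petersen.Adj v03 w → w = v12 ∨ w = v14 ∨ w = v24 := by decide
theorem adj_v04 : ∀ w, petersen.Adj v04 w → w = v12 ∨ w = v13 ∨ w = v23 := by decide
theorem adj_v12 : ∀ w, petersen.Adj v12 w → w = v03 ∨ w = v04 ∨ w = v34 := by decide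
theorem adj_v13 : ∀ w, petersen.Adj v13 w → w = v02 ∨ w = v04 ∨ w = v24 := by decide
theorem adj_v14 : ∀ w, petersen.Adj v14 w → w = v02 ∨ w = v03 ∨ w = v23 := by decide
theorem adj_v23 : ∀ w, petersen.Adj v23 w → w = v01 ∨ w = v04 ∨ w = v14 := by decide
theorem adj_v24 : ∀ w, petersen.Adj v24 w → w = v01 ∨ w = v03 ∨ w = v13 := by decide
theorem adj_v34 : ∀ w, petersen.Adj v34 w → w = v01 ∨ w = v02 ∨ w = v12 := by decide

/-- Any two of the six perfect matchings of the Petersen graph share exactly one edge, so its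
edges are labelled by the pairs of perfect matchings; these three edges form a triangle in that
labelling, hence every perfect matching contains none or two of them. -/
def triad : Finset (Sym2 PetersenVertex) := {s(v01, v23), s(v02, v14), s(v24, v13)}

theorem triad_subset_edgeSet : ∀ ε ∈ triad, ε ∈ petersen.edgeSet := by decide

theorem card_triad : #triad = 3 := by decide

open Classical in
theorem even_card_filter_triad_of_isPerfectMatching {M : petersen.Subgraph}
    (hM : M.IsPerfectMatching) : Even #{ε ∈ triad | ε ∈ M.edgeSet} := by
  choose f hf hunique using SimpleGraph.Subgraph.isPerfectMatching_iff.mp hM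
  have hadj v : petersen.Adj v (f v) := (hf v).adj_sub
  have hinv v : f (f v) = v := (hunique _ _ (hf v).symm).symm
  have hM_iff a b : M.Adj a b ↔ f a = b := ⟨fun h => (hunique a b h).symm, fun h => h ▸ hf a⟩
  have := adj_v01 _ (hadj v01); have := adj_v02 _ (hadj v02); have := adj_v03 _ (hadj v03)
  have := adj_v04 _ (hadj v04); have := adj_v12 _ (hadj v12); have := adj_v13 _ (hadj v13)
  have := adj_v14 _ (hadj v14); have := adj_v23 _ (hadj v23); have := adj_v24 _ (hadj v24)
  have := adj_v34 _ (hadj v34)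
  have hdistinct : [v01, v02, v03, v04, v12, v13, v14, v23, v24, v34].Nodup := by decide
  simp only [List.nodup_cons, List.mem_cons, List.not_mem_nil] at hdistinct
  simp only [triad, filter_insert, filter_singleton, SimpleGraph.Subgraph.mem_edgeSet, hM_iff]
  split_ifs <;> first | decide | grind

end Petersen

section

variable {k : ℕ} {M : Fin k → petersen.Subgraph}

def petersenEdge : (petersenPlusMatchings k M).E → Sym2 PetersenVertex :=
  Sum.elim Subtype.val fun p => p.2.1

@[simp] theorem petersenEdge_inl (e : petersen.edgeSet) :
    petersenEdge (M := M) (.inl e) = e.1 := rfl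

@[simp] theorem petersenEdge_inr (p : Σ i, (M i).edgeSet) :
    petersenEdge (.inr p) = p.2.1 := rfl

theorem ends_petersenPlusMatchings (e : (petersenPlusMatchings k M).E) :
    (petersenPlusMatchings k M).ends e = petersenEdge e := by
  rcases e with e | p <;> exact Quot.out_eq _

theorem petersenEdge_mem_edgeSet (e : (petersenPlusMatchings k M).E) :
    petersenEdge e ∈ petersen.edgeSet := by
  rcases e with e | ⟨i, e⟩
  · exact e.2
  · exact (M i).edgeSet_subset e.2

open Classical in
theorem card_petersenEdge_eq {ε : Sym2 PetersenVertex} (hε : ε ∈ petersen.edgeSet) :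
    Nat.card {e : (petersenPlusMatchings k M).E // petersenEdge e = ε} =
      1 + #{i | ε ∈ (M i).edgeSet} := by
  refine (Nat.card_congr (Equiv.subtypeSum (α := petersen.edgeSet) (β := Σ i, (M i).edgeSet)
    (p := fun e => petersenEdge e = ε))).trans ?_
  rw [Nat.card_sum, ← Fintype.card_subtype, ← Nat.card_eq_fintype_card]
  simp only [petersenEdge_inl, petersenEdge_inr]
  congr 1
  · exact Nat.card_eq_one_iff_unique.mpr
      ⟨⟨fun a b => Subtype.ext (Subtype.ext (a.2.trans b.2.symm))⟩, ⟨⟨⟨ε, hε⟩, rfl⟩⟩⟩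
  · refine Nat.card_congr (Equiv.ofBijective (fun ⟨⟨i, e⟩, he⟩ => ⟨i, he ▸ e.2⟩) ⟨?_, ?_⟩)
    · rintro ⟨⟨i, e₁⟩, h₁⟩ ⟨⟨j, e₂⟩, h₂⟩ h
      obtain rfl : i = j := congrArg Subtype.val h
      obtain rfl : e₁ = e₂ := Subtype.ext (h₁.trans h₂.symm)
      rfl
    · exact fun i => ⟨⟨⟨i.1, ⟨ε, i.2⟩⟩, rfl⟩, rfl⟩

open Classical in
theorem sum_card_petersenEdge_eq {T : Finset (Sym2 PetersenVertex)}
    (hT : ∀ ε ∈ T, ε ∈ petersen.edgeSet) :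
    ∑ ε ∈ T, Nat.card {e : (petersenPlusMatchings k M).E // petersenEdge e = ε} =
      #T + ∑ i, #{ε ∈ T | ε ∈ (M i).edgeSet} := by
  rw [sum_congr rfl fun ε hε => card_petersenEdge_eq (hT ε hε), sum_add_distrib,
    ← card_eq_sum_ones]
  congr 1
  exact sum_card_bipartiteAbove_eq_sum_card_bipartiteBelow _

end

theorem petersen_plus_matchings_class_two (k : ℕ) (M : Fin k → petersen.Subgraph)
    (hM : ∀ i, (M i).IsPerfectMatching)
    (hreg : (petersenPlusMatchings k M).IsRegular (k + 3)) :
    k + 3 < (petersenPlusMatchings k M).edgeChromaticNumber := by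
  classical
  by_contra! hle
  obtain ⟨c, hc⟩ := Multigraph.exists_isProperEdgeColoring_of_edgeChromaticNumber_le hle
  have hcolors := hc.even_sum_card_ends (H := petersen) (T := Petersen.triad)
    (fun N hN => Petersen.even_card_filter_triad_of_isPerfectMatching hN)
    (fun e => ends_petersenPlusMatchings e ▸ petersenEdge_mem_edgeSet e) hreg
  simp only [ends_petersenPlusMatchings] at hcolors
  -- `(petersenPlusMatchings k M).V` is `PetersenVertex` only up to unfolding; restate so that
  -- the rewrite below matches.
  replace hcolors : Even (∑ ε ∈ Petersen.triad,
      Nat.card {e : (petersenPlusMatchings k M).E // petersenEdge e = ε}) := hcolors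
  rw [sum_card_petersenEdge_eq Petersen.triad_subset_edgeSet, Petersen.card_triad] at hcolors
  have hmatchings : Even (∑ i, #{ε ∈ Petersen.triad | ε ∈ (M i).edgeSet}) :=
    even_sum _ fun i _ => Petersen.even_card_filter_triad_of_isPerfectMatching (hM i)
  exact absurd ((Nat.even_add.mp hcolors).mpr hmatchings) (by decide)
end

section
/- Let t ≥ 1 be an integer and let G be a (2t+1)-regular finite multigraph with a 1-factor F such that G − F is bipartite with bipartition classes A and B. Then the function w defined by w(v) = 2t for v ∈ A and w(v) = −2t for v ∈ B is a balanced valuation of G. -/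
/-!
`G - F` is `2t`-regular and each of its edges joins `A` to `B`, so `w v = deg_{G-F} v • σ v`
with `σ = 1` on `A` and `σ = -1` on `B`. Counting `∑_{v ∈ X} deg_{G-F} v • σ v` over the ends
in `X` of edges of `G - F`, an edge with both ends in `X` contributes `σ a + σ b = 0`, one with a
single end in `X` contributes `±1`, and the rest contribute nothing; hence the sum is bounded in
absolute value by the number of edges of `G - F` in `∂X`.
-/

open Set

theorem finsum_mem_indicator_comp_eq_ncard_smul {α β M : Type*} [Finite α] [Finite β]
    [AddCommMonoid M] (g : α → β) (S : Set α) (X : Set β) (f : β → M) :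
    ∑ᶠ a ∈ S, X.indicator f (g a) = ∑ᶠ b ∈ X, (S ∩ g ⁻¹' {b}).ncard • f b := by
  classical
  have := Fintype.ofFinite α
  have := Fintype.ofFinite β
  rw [finsum_mem_eq_toFinset_sum, finsum_mem_eq_toFinset_sum, ← Finset.sum_fiberwise _ g,
    ← Finset.sum_indicator_subset _ (Finset.subset_univ X.toFinset), coe_toFinset]
  refine Finset.sum_congr rfl fun b _ => ?_
  have hcard : {a ∈ S.toFinset | g a = b}.card = (S ∩ g ⁻¹' {b}).ncard := by
    rw [← ncard_coe_finset]; congr 1; ext; simp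
  rw [Finset.sum_congr rfl fun a ha => by rw [(Finset.mem_filter.1 ha).2], Finset.sum_const,
    hcard, indicator_smul_apply]

namespace Multigraph

variable {G : Multigraph}

noncomputable def degreeIn (G : Multigraph) (S : Set G.E) (v : G.V) : ℕ :=
  (S ∩ G.fst ⁻¹' {v}).ncard + (S ∩ G.snd ⁻¹' {v}).ncard

theorem degreeIn_add_degreeIn_compl (S : Set G.E) (v : G.V) :
    G.degreeIn S v + G.degreeIn Sᶜ v = G.degree v := by
  have hcard (g : G.E → G.V) : Nat.card {e // g e = v} = (g ⁻¹' {v}).ncard :=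
    Nat.card_coe_set_eq _
  rw [degree, hcard, hcard, ← ncard_inter_add_ncard_sdiff_eq_ncard (G.fst ⁻¹' {v}) S,
    ← ncard_inter_add_ncard_sdiff_eq_ncard (G.snd ⁻¹' {v}) S]
  simp only [degreeIn, sdiff_eq, inter_comm]
  ring

theorem IsOneFactor.degreeIn_eq_one {F : Set G.E} (hF : G.IsOneFactor F) (v : G.V) :
    G.degreeIn F v = 1 := by
  obtain ⟨e, he, huniq⟩ := hF.2 v
  have hdisj : Disjoint (F ∩ G.fst ⁻¹' {v}) (F ∩ G.snd ⁻¹' {v}) :=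
    Set.disjoint_left.2 fun e₁ h₁ h₂ => hF.1 e₁ h₁.1 (h₁.2.trans h₂.2.symm)
  have hunion : (F ∩ G.fst ⁻¹' {v}) ∪ (F ∩ G.snd ⁻¹' {v}) = {e} := by
    ext e'
    constructor
    · rintro (⟨h, h'⟩ | ⟨h, h'⟩)
      exacts [huniq e' ⟨h, Or.inl h'⟩, huniq e' ⟨h, Or.inr h'⟩]
    · rintro rfl
      exact he.2.imp (⟨he.1, ·⟩) (⟨he.1, ·⟩)
  rw [degreeIn, ← Set.ncard_union_eq hdisj, hunion, Set.ncard_singleton]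

theorem IsRegular.degreeIn_compl_eq {k : ℕ} (hreg : G.IsRegular (k + 1)) {F : Set G.E}
    (hF : G.IsOneFactor F) (v : G.V) : G.degreeIn Fᶜ v = k := by
  have := G.degreeIn_add_degreeIn_compl F v
  rw [hF.degreeIn_eq_one, hreg v] at this
  omega

theorem finsum_mem_degreeIn_smul {M : Type*} [AddCommMonoid M] (S : Set G.E) (X : Set G.V)
    (f : G.V → M) :
    ∑ᶠ v ∈ X, G.degreeIn S v • f v
      = ∑ᶠ e ∈ S, (X.indicator f (G.fst e) + X.indicator f (G.snd e)) := by
  simp only [degreeIn, add_smul]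
  rw [finsum_mem_add_distrib (Set.toFinite _), finsum_mem_add_distrib (Set.toFinite _),
    finsum_mem_indicator_comp_eq_ncard_smul, finsum_mem_indicator_comp_eq_ncard_smul]

theorem abs_indicator_add_indicator_le {f : G.V → ℝ} (hf : ∀ v, |f v| ≤ 1) {e : G.E}
    (he : f (G.fst e) + f (G.snd e) = 0) (X : Set G.V) :
    |X.indicator f (G.fst e) + X.indicator f (G.snd e)| ≤ (G.edgeBoundary X).indicator 1 e := by
  by_cases h₁ : G.fst e ∈ X <;> by_cases h₂ : G.snd e ∈ X <;>
    simp [edgeBoundary, indicator_of_mem, indicator_of_notMem, h₁, h₂, he, hf]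

theorem abs_finsum_mem_degreeIn_smul_le {S : Set G.E} {f : G.V → ℝ} (hf : ∀ v, |f v| ≤ 1)
    (hS : ∀ e ∈ S, f (G.fst e) + f (G.snd e) = 0) (X : Set G.V) :
    |∑ᶠ v ∈ X, G.degreeIn S v • f v| ≤ (G.edgeBoundary X ∩ S).ncard := by
  classical
  have := Fintype.ofFinite G.E
  rw [finsum_mem_degreeIn_smul, finsum_mem_eq_toFinset_sum]
  calc _ ≤ ∑ e ∈ S.toFinset, |X.indicator f (G.fst e) + X.indicator f (G.snd e)| :=
        Finset.abs_sum_le_sum_abs _ _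
    _ ≤ ∑ e ∈ S.toFinset, (G.edgeBoundary X).indicator 1 e :=
        Finset.sum_le_sum fun e he =>
          abs_indicator_add_indicator_le hf (hS e (by simpa using he)) X
    _ = (G.edgeBoundary X ∩ S).ncard := by
        rw [Finset.sum_indicator_eq_sum_filter]
        simp only [Pi.one_apply, Finset.sum_const, nsmul_one]
        rw [← ncard_coe_finset]
        simp [inter_comm]

end Multigraph

open scoped Classical in
theorem balancedValuation_of_one_factor_bipartite_complement_general (t : ℕ)
    (G : Multigraph) (hreg : G.IsRegular (2 * t + 1))
    (F : Set G.E) (hF : G.IsOneFactor F)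
    (A B : Set G.V)
    (hpart : ∀ v : G.V, (v ∈ A ∧ v ∉ B) ∨ (v ∈ B ∧ v ∉ A))
    (hbip : ∀ e ∉ F, (G.fst e ∈ A ∧ G.snd e ∈ B) ∨ (G.fst e ∈ B ∧ G.snd e ∈ A)) :
    G.IsBalancedValuation (fun v => if v ∈ A then (2 * (t : ℝ)) else -(2 * (t : ℝ))) := by
  have hB : ∀ v, v ∈ B ↔ v ∉ A := fun v => by rcases hpart v with h | h <;> tauto
  set σ : G.V → ℝ := fun v => if v ∈ A then 1 else -1
  have hσ : ∀ v, |σ v| ≤ 1 := fun v => by by_cases hv : v ∈ A <;> simp [σ, hv]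
  have hσ_edge : ∀ e ∈ Fᶜ, σ (G.fst e) + σ (G.snd e) = 0 := fun e he => by
    rcases hbip e he with ⟨h₁, h₂⟩ | ⟨h₁, h₂⟩ <;> simp_all [σ]
  have hw : (fun v => if v ∈ A then 2 * (t : ℝ) else -(2 * t))
      = fun v => G.degreeIn Fᶜ v • σ v := by
    funext v
    rw [hreg.degreeIn_compl_eq hF]
    by_cases hv : v ∈ A <;> simp [σ, hv]
  intro X
  rw [hw]
  exact (Multigraph.abs_finsum_mem_degreeIn_smul_le hσ hσ_edge X).trans
    (by exact_mod_cast ncard_le_ncard inter_subset_left)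

open scoped Classical in
theorem balancedValuation_of_one_factor_bipartite_complement (t : ℕ) (ht : 1 ≤ t)
    (G : Multigraph) (hreg : G.IsRegular (2 * t + 1))
    (F : Set G.E) (hF : G.IsOneFactor F)
    (A B : Set G.V)
    (hpart : ∀ v : G.V, (v ∈ A ∧ v ∉ B) ∨ (v ∈ B ∧ v ∉ A))
    (hbip : ∀ e ∉ F, (G.fst e ∈ A ∧ G.snd e ∈ B) ∨ (G.fst e ∈ B ∧ G.snd e ∈ A)) :
    G.IsBalancedValuation (fun v => if v ∈ A then (2 * (t : ℝ)) else -(2 * (t : ℝ))) :=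
  balancedValuation_of_one_factor_bipartite_complement_general t G hreg F hF A B hpart hbip
end

section
/- For every integer t ≥ 1, the complete graph K_{2t+2} on 2t+2 vertices has circular flow number F_c(K_{2t+2}) = 2 + 2/t. -/
/-- The complete graph on `n` vertices, as a multigraph. -/
def completeMultigraph (n : ℕ) : Multigraph where
  V := Fin n
  E := {p : Fin n × Fin n // p.1 < p.2}
  fst p := p.val.1
  snd p := p.val.2

/-!
A nowhere-zero `r`-flow on `K_n` is the same thing as a skew-symmetric matrix `g` with zero row
sums and `1 ≤ |g v u| ≤ r - 1` off the diagonal. For `n = 2t + 2` every row has an odd number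
`2t + 1` of nonzero entries, so its signs are unbalanced; replacing `g` by `-g` if necessary, at
least `t + 1` vertices have rows of positive sign. Call this set `X`. The net flow out of `X` is
zero, yet by antisymmetry the signs on the edges leaving `X` sum to at least `|X|`; since
forward edges carry at least `1` and backward ones at most `r - 1`, this forces
`r ≤ (r - 2)(t + 1)`, i.e. `r ≥ 2 + 2/t`. Conversely, split the vertices into two halves of size
`t + 1`, put a transitive tournament carrying `t + 1` on each half and let the edges between the
halves carry `t` or `t + 2`, balanced so that every row sums to zero; divided by `t` this is a
nowhere-zero `(2 + 2/t)`-flow.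
-/

open Finset SignType

section Antisymm

variable {V M : Type*} [Fintype V] [DecidableEq V] [AddCommGroup M] [IsAddTorsionFree M]

lemma sum_sum_compl_of_antisymm {h : V → V → M} (hh : ∀ v u, h u v = -h v u) (X : Finset V) :
    ∑ v ∈ X, ∑ u ∈ Xᶜ, h v u = ∑ v ∈ X, ∑ u, h v u := by
  have hX : ∑ v ∈ X, ∑ u ∈ X, h v u = 0 := self_eq_neg.mp <| by
    conv_lhs => rw [sum_comm]
    simp only [← sum_neg_distrib]
    exact sum_congr rfl fun v _ => sum_congr rfl fun u _ => hh v u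
  rw [← zero_add (∑ v ∈ X, ∑ u ∈ Xᶜ, h v u), ← hX, ← sum_add_distrib]
  simp only [sum_add_sum_compl]

end Antisymm

/-- A nowhere-zero `r`-flow on the complete graph with vertex set `V`, recorded as the
skew-symmetric matrix whose entry `g v u` is the net flow from `v` to `u`. -/
structure IsSkewFlow {V : Type*} [Fintype V] (r : ℝ) (g : V → V → ℝ) : Prop where
  antisymm : ∀ v u, g u v = -g v u
  one_le_abs : ∀ ⦃v u⦄, v ≠ u → 1 ≤ |g v u|
  abs_le : ∀ ⦃v u⦄, v ≠ u → |g v u| ≤ r - 1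
  sum_eq_zero : ∀ v, ∑ u, g v u = 0

namespace IsSkewFlow

variable {V W : Type*} [Fintype V] [Fintype W] {r : ℝ} {g : V → V → ℝ}

lemma apply_self (hg : IsSkewFlow r g) (v : V) : g v v = 0 := by
  linarith [hg.antisymm v v]

lemma ne_zero (hg : IsSkewFlow r g) {v u : V} (h : v ≠ u) : g v u ≠ 0 :=
  abs_pos.mp (one_pos.trans_le (hg.one_le_abs h))

lemma two_le (hg : IsSkewFlow r g) {v u : V} (h : v ≠ u) : 2 ≤ r := by
  linarith [hg.one_le_abs h, hg.abs_le h]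

lemma neg (hg : IsSkewFlow r g) : IsSkewFlow r fun v u => -g v u where
  antisymm v u := by rw [hg.antisymm]
  one_le_abs v u h := by simpa only [abs_neg] using hg.one_le_abs h
  abs_le v u h := by simpa only [abs_neg] using hg.abs_le h
  sum_eq_zero v := by rw [sum_neg_distrib, hg.sum_eq_zero, neg_zero]

lemma comp_equiv (hg : IsSkewFlow r g) (e : W ≃ V) : IsSkewFlow r fun a b => g (e a) (e b) where
  antisymm a b := hg.antisymm _ _
  one_le_abs a b h := hg.one_le_abs (e.injective.ne h)
  abs_le a b h := hg.abs_le (e.injective.ne h)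
  sum_eq_zero a := by rw [e.sum_comp (g (e a))]; exact hg.sum_eq_zero _

lemma sign_antisymm (hg : IsSkewFlow r g) (v u : V) :
    (sign (g u v) : ℤ) = -(sign (g v u) : ℤ) := by
  rw [hg.antisymm, Left.sign_neg, SignType.coe_neg]

lemma odd_sum_sign (hg : IsSkewFlow r g) (hV : Even (Fintype.card V)) (v : V) :
    Odd (∑ u, (sign (g v u) : ℤ)) := by
  classical
  have hterm : ∀ u ∈ univ.erase v, Even ((sign (g v u) : ℤ) - 1) := by
    intro u hu
    rcases lt_or_gt_of_ne (hg.ne_zero (ne_of_mem_erase hu).symm) with hneg | hpos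
    · simp [sign_neg hneg]
    · simp [sign_pos hpos]
  have hcard : Odd (#(univ.erase v) : ℤ) := by
    rw [card_erase_of_mem (mem_univ v), card_univ]
    have : 0 < Fintype.card V := Fintype.card_pos_iff.mpr ⟨v⟩
    exact_mod_cast Nat.Even.sub_odd this hV odd_one
  rw [← sum_erase_add _ _ (mem_univ v), hg.apply_self, sign_zero, SignType.coe_zero, add_zero,
    ← sub_add_cancel (∑ u ∈ univ.erase v, (sign (g v u) : ℤ)) (#(univ.erase v) : ℤ)]
  refine Even.add_odd ?_ hcard
  simpa only [sum_sub_distrib, sum_const, nsmul_one] using even_sum _ hterm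

lemma le_sub_two_mul_card_compl [DecidableEq V] (hg : IsSkewFlow r g) (hr : 0 ≤ r)
    {X : Finset V} (hX : X.Nonempty) (hpos : ∀ v ∈ X, 0 < ∑ u, (sign (g v u) : ℤ)) :
    r ≤ (r - 2) * #Xᶜ := by
  have hcut : ∑ v ∈ X, ∑ u ∈ Xᶜ, g v u = 0 := by
    simp only [sum_sum_compl_of_antisymm hg.antisymm, hg.sum_eq_zero, sum_const_zero]
  have hsign : (#X : ℤ) ≤ ∑ v ∈ X, ∑ u ∈ Xᶜ, (sign (g v u) : ℤ) := by
    rw [sum_sum_compl_of_antisymm hg.sign_antisymm]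
    simpa using card_nsmul_le_sum X (fun v => ∑ u, (sign (g v u) : ℤ)) 1 hpos
  have hedge : ∀ v ∈ X, ∀ u ∈ Xᶜ, r * (sign (g v u) : ℤ) - (r - 2) ≤ 2 * g v u := by
    intro v hv u hu
    have hvu : v ≠ u := fun h => mem_compl.mp hu (h ▸ hv)
    rcases lt_or_gt_of_ne (hg.ne_zero hvu) with hneg | hpos
    · have := hg.abs_le hvu
      rw [abs_of_neg hneg] at this
      simp only [sign_neg hneg, SignType.coe_neg_one, Int.cast_neg, Int.cast_one]
      linarith
    · have := hg.one_le_abs hvu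
      rw [abs_of_pos hpos] at this
      simp only [sign_pos hpos, SignType.coe_one, Int.cast_one]
      linarith
  have hsum := sum_le_sum fun v hv => sum_le_sum (hedge v hv)
  simp only [← mul_sum, hcut, mul_zero, sum_sub_distrib, sum_const, nsmul_eq_mul] at hsum
  have hsign' : (#X : ℝ) ≤ ∑ v ∈ X, ∑ u ∈ Xᶜ, ((sign (g v u) : ℤ) : ℝ) := by exact_mod_cast hsign
  have hXpos : (0 : ℝ) < #X := by exact_mod_cast hX.card_pos
  nlinarith [mul_le_mul_of_nonneg_left hsign' hr]

lemma two_le_sub_two_mul (hg : IsSkewFlow r g) {t : ℕ} (hV : Fintype.card V = 2 * t + 2) :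
    2 ≤ (r - 2) * t := by
  classical
  obtain ⟨a, b, hab⟩ := Fintype.exists_pair_of_one_lt_card (by omega : 1 < Fintype.card V)
  have hr := hg.two_le hab
  have hodd := hg.odd_sum_sign (hV ▸ ⟨t + 1, by ring⟩)
  obtain ⟨g', X, hg', hXc, hpos⟩ : ∃ (g' : V → V → ℝ) (X : Finset V), IsSkewFlow r g' ∧
      #Xᶜ ≤ t + 1 ∧ ∀ v ∈ X, 0 < ∑ u, (sign (g' v u) : ℤ) := by
    set X := univ.filter fun v => 0 < ∑ u, (sign (g v u) : ℤ)
    by_cases hX : t + 1 ≤ #X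
    · exact ⟨g, X, hg, by rw [card_compl]; omega, fun v hv => (mem_filter.mp hv).2⟩
    · refine ⟨_, Xᶜ, hg.neg, by rw [compl_compl]; omega, fun v hv => ?_⟩
      have hle : ¬ 0 < ∑ u, (sign (g v u) : ℤ) := fun h => mem_compl.mp hv (by simp [X, h])
      have hne : ∑ u, (sign (g v u) : ℤ) ≠ 0 := fun h => by simpa [h] using hodd v
      simp only [Left.sign_neg, SignType.coe_neg, sum_neg_distrib]
      omega
  have hX : X.Nonempty := card_pos.mp (by rw [card_compl] at hXc; omega)
  have hXc_real : (#Xᶜ : ℝ) ≤ t + 1 := by exact_mod_cast hXc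
  nlinarith [hg'.le_sub_two_mul_card_compl (by linarith) hX hpos]

end IsSkewFlow

namespace completeMultigraph

variable {n : ℕ}

instance : Fintype (completeMultigraph n).E :=
  inferInstanceAs (Fintype {p : Fin n × Fin n // p.1 < p.2})

def pairFlow (φ : (completeMultigraph n).E → ℝ) (p : Fin n × Fin n) : ℝ :=
  if h : p.1 < p.2 then φ ⟨p, h⟩ else 0

lemma finsum_mem_eq_sum_pairFlow (φ : (completeMultigraph n).E → ℝ)
    (P : Fin n × Fin n → Prop) [DecidablePred P] :
    ∑ᶠ e ∈ {e : (completeMultigraph n).E | P e.1}, φ e =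
      ∑ p, if P p then pairFlow φ p else 0 := by
  rw [finsum_mem_def, finsum_eq_sum_of_fintype]
  calc ∑ e, {e : (completeMultigraph n).E | P e.1}.indicator φ e
      = ∑ e : (completeMultigraph n).E, if P e.1 then pairFlow φ e.1 else 0 :=
        sum_congr rfl fun e _ => by
          rw [Set.indicator_apply, pairFlow, dif_pos e.2]
          rfl
    _ = ∑ p ∈ univ.filter fun p : Fin n × Fin n => p.1 < p.2,
          if P p then pairFlow φ p else 0 :=
        (sum_subtype (univ.filter fun p : Fin n × Fin n => p.1 < p.2) (by simp)
          fun p => if P p then pairFlow φ p else 0).symm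
    _ = ∑ p, if P p then pairFlow φ p else 0 := sum_filter_of_ne fun p _ hp => by
        by_contra hlt
        simp [pairFlow, hlt] at hp

lemma finsum_mem_fst_eq (φ : (completeMultigraph n).E → ℝ) (v : Fin n) :
    ∑ᶠ e ∈ {e | (completeMultigraph n).fst e = v}, φ e = ∑ u, pairFlow φ (v, u) := by
  refine (finsum_mem_eq_sum_pairFlow φ fun p => p.1 = v).trans ?_
  rw [Fintype.sum_prod_type_right]
  simp

lemma finsum_mem_snd_eq (φ : (completeMultigraph n).E → ℝ) (v : Fin n) :
    ∑ᶠ e ∈ {e | (completeMultigraph n).snd e = v}, φ e = ∑ u, pairFlow φ (u, v) := by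
  refine (finsum_mem_eq_sum_pairFlow φ fun p => p.2 = v).trans ?_
  rw [Fintype.sum_prod_type]
  simp

lemma sum_pairFlow_sub_eq (φ : (completeMultigraph n).E → ℝ) (v : Fin n) :
    ∑ u, (pairFlow φ (v, u) - pairFlow φ (u, v)) =
      (∑ᶠ e ∈ {e | (completeMultigraph n).fst e = v}, φ e) -
        ∑ᶠ e ∈ {e | (completeMultigraph n).snd e = v}, φ e := by
  rw [sum_sub_distrib, finsum_mem_fst_eq, finsum_mem_snd_eq]

lemma exists_abs_pairFlow_sub (φ : (completeMultigraph n).E → ℝ) {v u : Fin n} (h : v ≠ u) :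
    ∃ e, |pairFlow φ (v, u) - pairFlow φ (u, v)| = |φ e| := by
  rcases h.lt_or_gt with hvu | huv
  · exact ⟨⟨(v, u), hvu⟩, by simp [pairFlow, hvu, hvu.not_gt]⟩
  · exact ⟨⟨(u, v), huv⟩, by simp [pairFlow, huv, huv.not_gt]⟩

lemma pairFlow_sub_eq_of_antisymm {g : Fin n → Fin n → ℝ} (hg : ∀ v u, g u v = -g v u)
    (v u : Fin n) :
    pairFlow (fun e => g e.1.1 e.1.2) (v, u) - pairFlow (fun e => g e.1.1 e.1.2) (u, v) =
      g v u := by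
  rcases lt_trichotomy v u with hvu | rfl | huv
  · simp [pairFlow, hvu, hvu.not_gt]
  · linarith [hg v v]
  · simp [pairFlow, huv, huv.not_gt, hg v u]

lemma hasNowhereZeroFlow_iff {r : ℝ} :
    (completeMultigraph n).HasNowhereZeroFlow r ↔ ∃ g : Fin n → Fin n → ℝ, IsSkewFlow r g := by
  constructor
  · rintro ⟨φ, hbound, hcons⟩
    refine ⟨fun v u => pairFlow φ (v, u) - pairFlow φ (u, v), ⟨fun v u => by ring,
      fun v u h => ?_, fun v u h => ?_, fun v => ?_⟩⟩
    · obtain ⟨e, he⟩ := exists_abs_pairFlow_sub φ h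
      exact he ▸ (hbound e).1
    · obtain ⟨e, he⟩ := exists_abs_pairFlow_sub φ h
      exact he ▸ (hbound e).2
    · rw [sum_pairFlow_sub_eq, hcons v, sub_self]
  · rintro ⟨g, hg⟩
    refine ⟨fun e => g e.1.1 e.1.2, fun e => ⟨hg.one_le_abs e.2.ne, hg.abs_le e.2.ne⟩,
      fun v => sub_eq_zero.mp <| (sum_pairFlow_sub_eq _ v).symm.trans ?_⟩
    exact (sum_congr rfl fun u _ => pairFlow_sub_eq_of_antisymm hg.antisymm v u).trans
      (hg.sum_eq_zero v)

end completeMultigraph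

/-- Divided by `m - 1`, an optimal flow on `K_{2m}`: transitive tournaments carrying `m` on the
two halves, and cross weights `m ± 1` chosen so that every row sums to zero. -/
def blockFlow (m : ℕ) : Bool × Fin m → Bool × Fin m → ℝ
  | (false, i), (false, j) | (true, i), (true, j) =>
      if j < i then m else if i < j then -m else 0
  | (false, i), (true, j) => if i ≤ j then m - 1 else -(m + 1)
  | (true, i), (false, j) => if j ≤ i then -(m - 1) else m + 1

namespace blockFlow

variable {m : ℕ}

lemma antisymm (p q : Bool × Fin m) : blockFlow m q p = -blockFlow m p q := by
  obtain ⟨_ | _, i⟩ := p <;> obtain ⟨_ | _, j⟩ := q <;> simp only [blockFlow] <;>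
    split_ifs <;> first | ring1 | (exfalso; order)

lemma sum_eq_zero (p : Bool × Fin m) : ∑ q, blockFlow m p q = 0 := by
  obtain ⟨b, i⟩ := p
  have hrow : ∀ j, ∑ c, blockFlow m (b, i) (c, j) =
      (if b then 1 else -1) * (1 - if j = i then (m : ℝ) else 0) := by
    intro j
    cases b <;> simp only [Fintype.sum_bool, blockFlow, Bool.false_eq_true, if_true, if_false] <;>
      split_ifs <;> first | ring1 | (exfalso; order)
  rw [Fintype.sum_prod_type_right, sum_congr rfl fun j _ => hrow j, ← mul_sum, sum_sub_distrib]
  simp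

lemma abs_mem_Icc (hm : 1 ≤ m) {p q : Bool × Fin m} (h : p ≠ q) :
    |blockFlow m p q| ∈ Set.Icc ((m : ℝ) - 1) (m + 1) := by
  have hm' : (1 : ℝ) ≤ m := by exact_mod_cast hm
  obtain ⟨_ | _, i⟩ := p <;> obtain ⟨_ | _, j⟩ := q <;> simp only [blockFlow] <;>
    split_ifs <;> rw [Set.mem_Icc] <;>
    first
    | (rw [abs_of_nonneg (by linarith)]; constructor <;> linarith)
    | (rw [abs_of_nonpos (by linarith)]; constructor <;> linarith)
    | (exfalso; apply h; congr 1; order)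

end blockFlow

lemma isSkewFlow_blockFlow_div {t : ℕ} (ht : 1 ≤ t) :
    IsSkewFlow (2 + 2 / t) fun p q => blockFlow (t + 1) p q / t := by
  have htpos : (0 : ℝ) < t := by exact_mod_cast ht
  have hbounds := fun {p q : Bool × Fin (t + 1)} (h : p ≠ q) =>
    blockFlow.abs_mem_Icc (Nat.le_add_left 1 t) h
  push_cast at hbounds
  refine ⟨fun p q => by rw [blockFlow.antisymm, neg_div], fun p q h => ?_, fun p q h => ?_,
    fun p => by rw [← sum_div, blockFlow.sum_eq_zero, zero_div]⟩
  · rw [abs_div, abs_of_pos htpos, le_div_iff₀ htpos]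
    linarith [(hbounds h).1]
  · rw [abs_div, abs_of_pos htpos, div_le_iff₀ htpos, sub_mul, add_mul, div_mul_cancel₀ _ htpos.ne']
    linarith [(hbounds h).2]

lemma exists_isSkewFlow {V : Type*} [Fintype V] {t : ℕ} (ht : 1 ≤ t)
    (hV : Fintype.card V = 2 * t + 2) : ∃ g : V → V → ℝ, IsSkewFlow (2 + 2 / t) g :=
  ⟨_, (isSkewFlow_blockFlow_div ht).comp_equiv (Fintype.equivOfCardEq (by simp [hV]; ring))⟩

theorem flowNumber_completeMultigraph (t : ℕ) (ht : 1 ≤ t) :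
    (completeMultigraph (2 * t + 2)).flowNumber = ((2 + 2 / (t : ℝ) : ℝ) : EReal) := by
  have hcard : Fintype.card (Fin (2 * t + 2)) = 2 * t + 2 := Fintype.card_fin _
  refine le_antisymm (sInf_le ⟨_, rfl, ?_⟩) (le_sInf ?_)
  · exact completeMultigraph.hasNowhereZeroFlow_iff.2 (exists_isSkewFlow ht hcard)
  · rintro _ ⟨r, rfl, hr⟩
    obtain ⟨g, hg⟩ := completeMultigraph.hasNowhereZeroFlow_iff.1 hr
    have htpos : (0 : ℝ) < t := by exact_mod_cast ht
    have hlower : 2 / (t : ℝ) ≤ r - 2 := (div_le_iff₀ htpos).2 (hg.two_le_sub_two_mul hcard)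
    exact EReal.coe_le_coe_iff.2 (by linarith)
end

section
/- Let t > 1 be an integer and let G be a (2t+1)-regular finite multigraph. If the circular flow number of G satisfies F_c(G) < 2 + 1/(t−1), then G is a (2t+1)-graph, i.e., |∂_G(X)| ≥ 2t+1 for every vertex subset X of odd cardinality. -/
private lemma odd_cut_arith_half (t p q : ℕ) (ht : 1 < t) (r S : ℝ)
    (hr : r < 2 + 1 / ((t : ℝ) - 1))
    (h1 : (q : ℝ) ≤ S) (h2 : S ≤ p * (r - 1))
    (hpq : p < q) : 2 * t + 1 ≤ p + q := by
  have ht1 : (1 : ℝ) ≤ (t : ℝ) - 1 := by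
    have : (2 : ℝ) ≤ (t : ℝ) := by exact_mod_cast ht
    linarith
  have ht0 : (0 : ℝ) < (t : ℝ) - 1 := by linarith
  have hrt : (r - 2) * ((t : ℝ) - 1) < 1 := by
    have h : r - 2 < 1 / ((t : ℝ) - 1) := by linarith
    have h2 := mul_lt_mul_of_pos_right h ht0
    rwa [one_div_mul_cancel (ne_of_gt ht0)] at h2
  have hq : (p : ℝ) + 1 ≤ (q : ℝ) := by exact_mod_cast hpq
  have hp2 : 1 ≤ (p : ℝ) * (r - 2) := by nlinarith
  have hppos : (0 : ℝ) < p := by nlinarith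
  have : (t : ℝ) - 1 < (p : ℝ) := by nlinarith
  have htp : t ≤ p := by
    have h3 : (t : ℝ) < (p : ℝ) + 1 := by linarith
    exact_mod_cast Nat.lt_succ_iff.mp (by exact_mod_cast h3)
  omega

theorem odd_cut_large_of_flowNumber_lt (t : ℕ) (ht : 1 < t)
    (G : Multigraph) (hreg : G.IsRegular (2 * t + 1))
    (hflow : G.flowNumber < ((2 + 1 / ((t : ℝ) - 1) : ℝ) : EReal)) :
    ∀ X : Set G.V, Odd X.ncard → 2 * t + 1 ≤ (G.edgeBoundary X).ncard := by
  classical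
  haveI : Fintype G.V := Fintype.ofFinite _
  haveI : Fintype G.E := Fintype.ofFinite _
  -- extract a flow with r < 2 + 1/(t-1)
  rw [Multigraph.flowNumber, sInf_lt_iff] at hflow
  obtain ⟨x, ⟨r, rfl, φ, hbd, hcons⟩, hlt⟩ := hflow
  have hr : r < 2 + 1 / ((t : ℝ) - 1) := by exact_mod_cast hlt
  intro X hX
  -- Finset versions
  set Xf : Finset G.V := X.toFinset with hXf
  have hmemXf : ∀ v, v ∈ Xf ↔ v ∈ X := fun v => Set.mem_toFinset
  set bd : Finset G.E := Finset.univ.filter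
      (fun e => (G.fst e ∈ X) ≠ (G.snd e ∈ X)) with hbdd
  have hbdcoe : G.edgeBoundary X = ↑bd := by
    ext e; simp [Multigraph.edgeBoundary, hbdd]
  have hncard : (G.edgeBoundary X).ncard = bd.card := by
    rw [hbdcoe, Set.ncard_coe_finset]
  set FA : Finset G.E := Finset.univ.filter
      (fun e => G.fst e ∈ X ∧ G.snd e ∉ X) with hFA
  set FB : Finset G.E := Finset.univ.filter
      (fun e => G.snd e ∈ X ∧ G.fst e ∉ X) with hFB
  -- bd.card = FA.card + FB.card
  have hbdsplit : bd.card = FA.card + FB.card := by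
    rw [← Finset.card_filter_add_card_filter_not
      (s := bd) (p := fun e => G.fst e ∈ X)]
    congr 1
    · congr 1; ext e; simp only [hbdd, hFA, Finset.mem_filter, Finset.mem_univ, true_and,
        Ne, eq_iff_iff]
      tauto
    · congr 1; ext e; simp only [hbdd, hFB, Finset.mem_filter, Finset.mem_univ, true_and,
        Ne, eq_iff_iff]
      tauto
  -- fiber decomposition of counts and sums
  have hfibfst : ∀ v ∈ Xf, (Finset.univ.filter (fun e => G.fst e ∈ X)).filter (fun e => G.fst e = v)
      = Finset.univ.filter (fun e => G.fst e = v) := by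
    intro v hv
    ext e
    simp only [Finset.filter_filter, Finset.mem_filter, Finset.mem_univ, true_and]
    exact ⟨fun h => h.2, fun h => ⟨h ▸ (hmemXf v).1 hv, h⟩⟩
  have hfibsnd : ∀ v ∈ Xf, (Finset.univ.filter (fun e => G.snd e ∈ X)).filter (fun e => G.snd e = v)
      = Finset.univ.filter (fun e => G.snd e = v) := by
    intro v hv
    ext e
    simp only [Finset.filter_filter, Finset.mem_filter, Finset.mem_univ, true_and]
    exact ⟨fun h => h.2, fun h => ⟨h ▸ (hmemXf v).1 hv, h⟩⟩
  have hfiberfst : ∀ {M : Type} [AddCommMonoid M] (f : G.E → M),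
      ∑ v ∈ Xf, ∑ e ∈ Finset.univ.filter (fun e => G.fst e = v), f e
      = ∑ e ∈ Finset.univ.filter (fun e => G.fst e ∈ X), f e := by
    intro M _ f
    rw [← Finset.sum_fiberwise_of_maps_to (g := G.fst)
      (fun e he => by simp only [Finset.mem_filter] at he; exact (hmemXf _).2 he.2) f]
    exact Finset.sum_congr rfl (fun v hv => by rw [hfibfst v hv])
  have hfibersnd : ∀ {M : Type} [AddCommMonoid M] (f : G.E → M),
      ∑ v ∈ Xf, ∑ e ∈ Finset.univ.filter (fun e => G.snd e = v), f e
      = ∑ e ∈ Finset.univ.filter (fun e => G.snd e ∈ X), f e := by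
    intro M _ f
    rw [← Finset.sum_fiberwise_of_maps_to (g := G.snd)
      (fun e he => by simp only [Finset.mem_filter] at he; exact (hmemXf _).2 he.2) f]
    exact Finset.sum_congr rfl (fun v hv => by rw [hfibsnd v hv])
  -- splitting of the one-sided filters
  have hsplitfst : ∀ {M : Type} [AddCommMonoid M] (f : G.E → M),
      ∑ e ∈ Finset.univ.filter (fun e => G.fst e ∈ X), f e
      = (∑ e ∈ Finset.univ.filter (fun e => G.fst e ∈ X ∧ G.snd e ∈ X), f e) + ∑ e ∈ FA, f e := by
    intro M _ f
    rw [← Finset.sum_filter_add_sum_filter_not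
      (Finset.univ.filter (fun e => G.fst e ∈ X)) (fun e => G.snd e ∈ X)]
    congr 1
    · apply Finset.sum_congr _ (fun _ _ => rfl); ext e
      simp [Finset.filter_filter]
    · apply Finset.sum_congr _ (fun _ _ => rfl); ext e
      simp [hFA, Finset.filter_filter]
  have hsplitsnd : ∀ {M : Type} [AddCommMonoid M] (f : G.E → M),
      ∑ e ∈ Finset.univ.filter (fun e => G.snd e ∈ X), f e
      = (∑ e ∈ Finset.univ.filter (fun e => G.fst e ∈ X ∧ G.snd e ∈ X), f e) + ∑ e ∈ FB, f e := by
    intro M _ f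
    rw [← Finset.sum_filter_add_sum_filter_not
      (Finset.univ.filter (fun e => G.snd e ∈ X)) (fun e => G.fst e ∈ X)]
    congr 1
    · apply Finset.sum_congr _ (fun _ _ => rfl); ext e
      simp only [Finset.filter_filter, Finset.mem_filter, Finset.mem_univ, true_and] <;> tauto
    · apply Finset.sum_congr _ (fun _ _ => rfl); ext e
      simp only [hFB, Finset.filter_filter, Finset.mem_filter, Finset.mem_univ, true_and] <;> tauto
  -- parity: bd.card is odd
  have hdeg : ∀ v : G.V, G.degree v
      = (Finset.univ.filter (fun e => G.fst e = v)).card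
        + (Finset.univ.filter (fun e => G.snd e = v)).card := by
    intro v
    rw [Multigraph.degree, Nat.card_eq_fintype_card, Nat.card_eq_fintype_card,
      Fintype.card_subtype, Fintype.card_subtype]
  have hodd : Odd bd.card := by
    have hdegsum : ∑ v ∈ Xf, G.degree v = (2 * t + 1) * Xf.card := by
      rw [Finset.sum_congr rfl (fun v _ => hreg v), Finset.sum_const, smul_eq_mul, mul_comm]
    have hcount : ∑ v ∈ Xf, G.degree v
        = (Finset.univ.filter (fun e => G.fst e ∈ X)).card
          + (Finset.univ.filter (fun e => G.snd e ∈ X)).card := by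
      rw [Finset.sum_congr rfl (fun v _ => hdeg v), Finset.sum_add_distrib]
      congr 1
      · have := hfiberfst (fun _ => (1 : ℕ))
        simpa using this
      · have := hfibersnd (fun _ => (1 : ℕ))
        simpa using this
    have hsf : (Finset.univ.filter (fun e => G.fst e ∈ X)).card
        = (Finset.univ.filter (fun e => G.fst e ∈ X ∧ G.snd e ∈ X)).card + FA.card := by
      have := hsplitfst (fun _ => (1 : ℕ))
      simpa using this
    have hss : (Finset.univ.filter (fun e => G.snd e ∈ X)).card
        = (Finset.univ.filter (fun e => G.fst e ∈ X ∧ G.snd e ∈ X)).card + FB.card := by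
      have := hsplitsnd (fun _ => (1 : ℕ))
      simpa using this
    have hXcard : Odd Xf.card := by rwa [Set.ncard_eq_toFinset_card'] at hX
    rw [hbdsplit]
    obtain ⟨k, hk⟩ := hXcard
    have : (2 * t + 1) * Xf.card
        = (Finset.univ.filter (fun e => G.fst e ∈ X ∧ G.snd e ∈ X)).card * 2
          + (FA.card + FB.card) := by
      rw [← hdegsum, hcount, hsf, hss]; ring
    rw [hk] at this
    have hexp : (2 * t + 1) * (2 * k + 1) = 2 * ((2 * t + 1) * k + t) + 1 := by ring
    rw [hexp] at this
    exact ⟨(2 * t + 1) * k + t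
      - (Finset.univ.filter (fun e => G.fst e ∈ X ∧ G.snd e ∈ X)).card, by omega⟩
  -- flow across the cut
  have hconsF : ∀ v : G.V, ∑ e ∈ Finset.univ.filter (fun e => G.fst e = v), φ e
      = ∑ e ∈ Finset.univ.filter (fun e => G.snd e = v), φ e := by
    intro v
    have h := hcons v
    rw [show {e : G.E | G.fst e = v} = ↑(Finset.univ.filter (fun e => G.fst e = v)) by ext e; simp,
        show {e : G.E | G.snd e = v} = ↑(Finset.univ.filter (fun e => G.snd e = v)) by ext e; simp,
        finsum_mem_coe_finset, finsum_mem_coe_finset] at h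
    exact h
  have hAB : ∑ e ∈ FA, φ e = ∑ e ∈ FB, φ e := by
    have h1 : ∑ e ∈ Finset.univ.filter (fun e => G.fst e ∈ X), φ e
        = ∑ e ∈ Finset.univ.filter (fun e => G.snd e ∈ X), φ e := by
      rw [← hfiberfst φ, ← hfibersnd φ]
      exact Finset.sum_congr rfl (fun v _ => hconsF v)
    rw [hsplitfst φ, hsplitsnd φ] at h1
    linarith
  -- the outflow function
  set ψ : G.E → ℝ := fun e => if G.fst e ∈ X then φ e else -φ e with hψ
  have hψabs : ∀ e, |ψ e| = |φ e| := by
    intro e; rw [hψ]; dsimp only; split <;> simp [abs_neg]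
  have hsum0 : ∑ e ∈ bd, ψ e = 0 := by
    have hbdu : bd = FA ∪ FB := by
      ext e
      simp only [hbdd, hFA, hFB, Finset.mem_union, Finset.mem_filter, Finset.mem_univ,
        true_and, Ne, eq_iff_iff]
      tauto
    have hdisj : Disjoint FA FB := by
      rw [Finset.disjoint_left]
      intro e he1 he2
      simp only [hFA, hFB, Finset.mem_filter, Finset.mem_univ, true_and] at he1 he2
      exact he2.2 he1.1
    rw [hbdu, Finset.sum_union hdisj]
    have hA : ∑ e ∈ FA, ψ e = ∑ e ∈ FA, φ e := by
      apply Finset.sum_congr rfl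
      intro e he
      simp only [hFA, Finset.mem_filter] at he
      simp [hψ, he.2.1]
    have hB : ∑ e ∈ FB, ψ e = -∑ e ∈ FB, φ e := by
      rw [← Finset.sum_neg_distrib]
      apply Finset.sum_congr rfl
      intro e he
      simp only [hFB, Finset.mem_filter] at he
      simp [hψ, he.2.2]
    rw [hA, hB, hAB]; ring
  -- split bd into positive and negative parts
  set P : Finset G.E := bd.filter (fun e => 0 < ψ e) with hP
  set N : Finset G.E := bd.filter (fun e => ¬ 0 < ψ e) with hN
  have hcardPN : P.card + N.card = bd.card :=
    Finset.card_filter_add_card_filter_not _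
  have hsumPN : ∑ e ∈ P, ψ e + ∑ e ∈ N, ψ e = 0 := by
    rw [Finset.sum_filter_add_sum_filter_not]; exact hsum0
  set S : ℝ := ∑ e ∈ P, ψ e with hS
  have hPbound : ∀ e ∈ P, 1 ≤ ψ e ∧ ψ e ≤ r - 1 := by
    intro e he
    simp only [hP, Finset.mem_filter] at he
    have h := hbd e
    rw [← hψabs e] at h
    rw [abs_of_pos he.2] at h
    exact h
  have hNbound : ∀ e ∈ N, 1 ≤ -ψ e ∧ -ψ e ≤ r - 1 := by
    intro e he
    simp only [hN, Finset.mem_filter, not_lt] at he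
    have h := hbd e
    rw [← hψabs e] at h
    have hne : ψ e ≠ 0 := by
      intro h0; rw [h0] at h; simp at h; linarith [h.1]
    have hlt : ψ e < 0 := lt_of_le_of_ne he.2 hne
    rw [abs_of_neg hlt] at h
    exact h
  have hcP1 : (P.card : ℝ) ≤ S := by
    calc (P.card : ℝ) = ∑ _e ∈ P, (1 : ℝ) := by simp
    _ ≤ S := Finset.sum_le_sum (fun e he => (hPbound e he).1)
  have hcP2 : S ≤ P.card * (r - 1) := by
    calc S ≤ ∑ _e ∈ P, (r - 1) := Finset.sum_le_sum (fun e he => (hPbound e he).2)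
    _ = P.card * (r - 1) := by rw [Finset.sum_const, nsmul_eq_mul]
  have hNS : ∑ e ∈ N, -ψ e = S := by
    rw [Finset.sum_neg_distrib]; linarith
  have hcN1 : (N.card : ℝ) ≤ S := by
    calc (N.card : ℝ) = ∑ _e ∈ N, (1 : ℝ) := by simp
    _ ≤ ∑ e ∈ N, -ψ e := Finset.sum_le_sum (fun e he => (hNbound e he).1)
    _ = S := hNS
  have hcN2 : S ≤ N.card * (r - 1) := by
    calc S = ∑ e ∈ N, -ψ e := hNS.symm
    _ ≤ ∑ _e ∈ N, (r - 1) := Finset.sum_le_sum (fun e he => (hNbound e he).2)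
    _ = N.card * (r - 1) := by rw [Finset.sum_const, nsmul_eq_mul]
  -- conclude
  rw [hncard, ← hcardPN]
  rcases lt_trichotomy P.card N.card with h | h | h
  · exact odd_cut_arith_half t P.card N.card ht r S hr hcN1 hcP2 h
  · exfalso; obtain ⟨m, hm⟩ := hodd; omega
  · have := odd_cut_arith_half t N.card P.card ht r S hr hcP1 hcN2 h
    omega
end
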